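/- arXiv:1704.09018 — 10 statements merged into one kernel-verified Lean document; each statement's English description precedes it below -/
import Mathlib

section
/- If A is a totally unimodular matrix (every square submatrix has determinant 0, 1, or -1), then every vector in the Graver basis of A has all entries in {-1, 0, 1}. -/
/-- `u` lies in the Graver basis of `A`: it is a nonzero integer kernel vector that is not a
nontrivial conformal sum, i.e. there is no other nonzero kernel vector `v` with
`v⁺ ≤ u⁺` and `v⁻ ≤ u⁻` componentwise. -/
def InGraverBasis {m n : Type*} [Fintype m] [Fintype n] (A : Matrix m n ℤ) (u : n → ℤ) : Prop :=
  u ≠ 0 ∧ A.mulVec u = 0 ∧ ∀ v : n → ℤ, v ≠ 0 → A.mulVec v = 0 → v ≠ u →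
    ¬((∀ i, max (v i) 0 ≤ max (u i) 0) ∧ (∀ i, max (-v i) 0 ≤ max (-u i) 0))

/-- `A` is totally unimodular: every square submatrix has determinant `0`, `1`, or `-1`. -/
def IsTotallyUnimodularMat {m n : Type*} [Fintype m] [Fintype n] (A : Matrix m n ℤ) : Prop :=
  ∀ (k : ℕ) (f : Fin k → m) (g : Fin k → n), Function.Injective f → Function.Injective g →
    (A.submatrix f g).det = 0 ∨ (A.submatrix f g).det = 1 ∨ (A.submatrix f g).det = -1

/-!
If some coordinate of a kernel vector `u` satisfies `|uᵢ| ≥ 2`, then `u / 2` is a rational point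
of `ker A` in the integer box `⌊u / 2⌋ ≤ x ≤ ⌈u / 2⌉`. For totally unimodular `A` such a box
contains an integer kernel vector: moving `x` along a kernel direction supported on its
non-integer coordinates until it hits the boundary of the box makes one more coordinate an
integer, and once the columns of `A` at the non-integer coordinates are linearly independent,
those coordinates solve a square subsystem of determinant `±1`, hence are integers as well.
The integer point `v` so obtained is conformal to `u`, nonzero, and different from `u`.
-/

open Matrix Set

theorem IsTotallyUnimodularMat.isTotallyUnimodular {m n : Type*} [Fintype m] [Fintype n]
    {A : Matrix m n ℤ} (hA : IsTotallyUnimodularMat A) : A.IsTotallyUnimodular := by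
  intro k f g hf hg
  rcases hA k f g hf hg with h | h | h
  exacts [⟨0, h.symm⟩, ⟨1, h.symm⟩, ⟨-1, by simp [h]⟩]

namespace Matrix

theorem intCast_comp_mulVec {m n R : Type*} [Fintype n] [Ring R] (A : Matrix m n ℤ)
    (v : n → ℤ) : ((↑) : ℤ → R) ∘ (A *ᵥ v) = A.map (↑) *ᵥ ((↑) ∘ v) :=
  funext (RingHom.map_mulVec (Int.castRingHom R) A v)

theorem exists_isUnit_submatrix_of_linearIndependent_col {m ι K : Type*} [Field K] [Fintype m]
    [Fintype ι] [DecidableEq ι] {C : Matrix m ι K} (hC : LinearIndependent K C.col) :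
    ∃ f : ι → m, f.Injective ∧ IsUnit (C.submatrix f id) := by
  obtain ⟨κ, a, ha, hspan, hli⟩ := exists_linearIndependent' K C.row
  have : Fintype κ := Fintype.ofInjective a ha
  have hcard : Fintype.card ι = Fintype.card κ := by
    rw [linearIndependent_iff_card_eq_finrank_span.1 hli, Set.finrank, hspan,
      ← rank_eq_finrank_span_row, ← rank_transpose]
    exact (LinearIndependent.rank_matrix hC).symm
  let e := Fintype.equivOfCardEq hcard
  refine ⟨a ∘ e, ha.comp e.injective, ?_⟩
  rw [← linearIndependent_rows_iff_isUnit]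
  exact hli.comp e e.injective

theorem exists_intCast_of_mulVec_eq_intCast {ι : Type*} [Fintype ι] [DecidableEq ι]
    {D : Matrix ι ι ℤ} (hD : IsUnit D.det) {y : ι → ℚ} {b : ι → ℤ}
    (hy : D.map (↑) *ᵥ y = (↑) ∘ b) : ∃ z : ι → ℤ, y = (↑) ∘ z := by
  have hDℚ : IsUnit (D.map ((↑) : ℤ → ℚ)) := by
    rw [isUnit_iff_isUnit_det, ← Int.cast_det]
    exact hD.map (Int.castRingHom ℚ)
  refine ⟨D⁻¹ *ᵥ b, mulVec_injective_iff_isUnit.2 hDℚ ?_⟩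
  rw [hy, ← intCast_comp_mulVec, mulVec_mulVec, mul_nonsing_inv _ hD, one_mulVec]

end Matrix

section BoxExit

variable {K : Type*} [Field K] [LinearOrder K] [IsStrictOrderedRing K]

theorem add_mul_mem_Icc_of_le {a b x y s t : K} (hx : x ∈ Icc a b) (hs : x + s * y ∈ Icc a b)
    (ht : 0 ≤ t) (hts : t ≤ s) : x + t * y ∈ Icc a b := by
  obtain ⟨hax, hxb⟩ := hx
  obtain ⟨has, hsb⟩ := hs
  rcases le_total 0 y with hy | hy
  · have := mul_le_mul_of_nonneg_right hts hy
    constructor <;> nlinarith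
  · have := mul_le_mul_of_nonpos_right hts hy
    constructor <;> nlinarith

theorem exists_add_mul_mem_Icc_and_eq_bound {ι : Type*} [Fintype ι] {l c x y : ι → K}
    (hx : ∀ i, x i ∈ Icc (l i) (c i)) (hy : y ≠ 0) :
    ∃ t : K, (∀ i, x i + t * y i ∈ Icc (l i) (c i)) ∧
      ∃ j, y j ≠ 0 ∧ (x j + t * y j = l j ∨ x j + t * y j = c j) := by
  classical
  -- the step size after which coordinate `i` alone reaches the boundary of the box
  let q : ι → K := fun i => if 0 < y i then (c i - x i) / y i else (l i - x i) / y i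
  have hq : ∀ i, y i ≠ 0 → 0 ≤ q i ∧ (x i + q i * y i = l i ∨ x i + q i * y i = c i) := by
    intro i hyi
    obtain ⟨hl, hc⟩ := hx i
    by_cases hpos : 0 < y i
    · simp only [q, if_pos hpos, div_mul_cancel₀ _ hyi]
      exact ⟨div_nonneg (by linarith) hpos.le, Or.inr (by ring)⟩
    · simp only [q, if_neg hpos, div_mul_cancel₀ _ hyi]
      exact ⟨div_nonneg_of_nonpos (by linarith) (not_lt.1 hpos), Or.inl (by ring)⟩
  have hsupp : ({i | y i ≠ 0} : Finset ι).Nonempty := by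
    obtain ⟨i, hi⟩ := Function.ne_iff.1 hy
    exact ⟨i, by simpa using hi⟩
  obtain ⟨j, hj, hjmin⟩ := Finset.exists_min_image _ q hsupp
  simp only [Finset.mem_filter, Finset.mem_univ, true_and] at hj hjmin
  refine ⟨q j, fun i => ?_, j, hj, (hq j hj).2⟩
  by_cases hyi : y i = 0
  · simpa [hyi] using hx i
  · have hbound : x i + q i * y i ∈ Icc (l i) (c i) := by
      rcases (hq i hyi).2 with h | h <;> rw [h]
      exacts [left_mem_Icc.2 ((hx i).1.trans (hx i).2), right_mem_Icc.2 ((hx i).1.trans (hx i).2)]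
    exact add_mul_mem_Icc_of_le (hx i) hbound (hq j hj).1 (hjmin i hyi)

end BoxExit

def fracSupport {n : Type*} [Fintype n] (x : n → ℚ) : Finset n := {i | (⌊x i⌋ : ℚ) ≠ x i}

theorem notMem_fracSupport {n : Type*} [Fintype n] {x : n → ℚ} {i : n} :
    i ∉ fracSupport x ↔ (⌊x i⌋ : ℚ) = x i := by
  simp [fracSupport]

theorem Matrix.exists_mulVec_eq_zero_of_not_linearIndependent {m n K : Type*} [Fintype n]
    [Field K] {M : Matrix m n K} {s : Finset n}
    (h : ¬LinearIndependent K (fun j : s => M.col j)) :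
    ∃ y : n → K, y ≠ 0 ∧ M *ᵥ y = 0 ∧ ∀ i ∉ s, y i = 0 := by
  classical
  obtain ⟨g, hg, j, hj⟩ := Fintype.not_linearIndependent_iff.1 h
  refine ⟨fun i => if hi : i ∈ s then g ⟨i, hi⟩ else 0, fun h0 => hj ?_, ?_,
    fun i hi => dif_neg hi⟩
  · simpa using congrFun h0 j
  · ext r
    have := congrFun hg r
    simp only [Finset.sum_apply, Pi.smul_apply, col_apply, smul_eq_mul] at this
    rw [mulVec, dotProduct, ← Finset.sum_subset s.subset_univ, ← Finset.sum_coe_sort s]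
    · simpa [mul_comm] using this
    · intro i _ hi
      simp [hi]

namespace Matrix.IsTotallyUnimodular

variable {m n : Type*} [Fintype m] [Fintype n] {A : Matrix m n ℤ}

theorem fracSupport_eq_empty (hA : A.IsTotallyUnimodular) {b : m → ℤ} {x : n → ℚ}
    (hx : A.map (↑) *ᵥ x = (↑) ∘ b)
    (hF : LinearIndependent ℚ (fun j : fracSupport x => (A.map ((↑) : ℤ → ℚ)).col j)) :
    fracSupport x = ∅ := by
  classical
  set F := fracSupport x
  have hF' : LinearIndependent ℚ ((A.map ((↑) : ℤ → ℚ)).submatrix id ((↑) : F → n)).col := hF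
  obtain ⟨f, -, hunit⟩ := exists_isUnit_submatrix_of_linearIndependent_col hF'
  set D := A.submatrix f ((↑) : F → n)
  have hD : IsUnit D.det := by
    have hDℚ : IsUnit (D.map ((↑) : ℤ → ℚ)) := hunit
    rw [isUnit_iff_isUnit_det, ← Int.cast_det] at hDℚ
    have hne : D.det ≠ 0 := Int.cast_ne_zero.1 hDℚ.ne_zero
    obtain ⟨s, hs⟩ : D.det ∈ range SignType.cast :=
      (isTotallyUnimodular_iff_fintype A).1 hA F f (↑)
    rw [Int.isUnit_iff]
    rcases s <;> simp [← hs] at hne ⊢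
  have hrows : D.map (↑) *ᵥ (fun j : F => x j) =
      (↑) ∘ fun r => b (f r) - ∑ j ∈ Fᶜ, A (f r) j * ⌊x j⌋ := by
    ext r
    have hr := congrFun hx (f r)
    rw [mulVec, dotProduct, ← Finset.sum_add_sum_compl F, ← Finset.sum_coe_sort F] at hr
    have hoff : ∑ j ∈ Fᶜ, (A (f r) j : ℚ) * x j = ∑ j ∈ Fᶜ, (A (f r) j : ℚ) * ⌊x j⌋ :=
      Finset.sum_congr rfl fun j hj => by rw [notMem_fracSupport.1 (Finset.mem_compl.1 hj)]
    simp only [map_apply, Function.comp_apply] at hr ⊢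
    push_cast
    rw [← hr, hoff]
    simp [mulVec, dotProduct, D]
  obtain ⟨z, hz⟩ := exists_intCast_of_mulVec_eq_intCast hD hrows
  refine Finset.eq_empty_of_forall_notMem fun j hj => notMem_fracSupport.2 ?_ hj
  have hxj : x j = z ⟨j, hj⟩ := congrFun hz ⟨j, hj⟩
  rw [hxj, Int.floor_intCast]

theorem exists_intVec_mulVec_eq_of_rat (hA : A.IsTotallyUnimodular) {b : m → ℤ} {l c : n → ℤ}
    {x : n → ℚ} (hx : A.map (↑) *ᵥ x = (↑) ∘ b) (hbox : ∀ i, x i ∈ Icc (l i : ℚ) (c i)) :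
    ∃ v : n → ℤ, A *ᵥ v = b ∧ ∀ i, v i ∈ Icc (l i) (c i) := by
  induction hN : (fracSupport x).card using Nat.strong_induction_on generalizing x with
  | _ N ih =>
  by_cases hF : LinearIndependent ℚ (fun j : fracSupport x => (A.map ((↑) : ℤ → ℚ)).col j)
  · have hint : ∀ i, (⌊x i⌋ : ℚ) = x i := fun i =>
      notMem_fracSupport.1 (by simp [hA.fracSupport_eq_empty hx hF])
    refine ⟨fun i => ⌊x i⌋, (Int.cast_injective (α := ℚ)).comp_left ?_, fun i => ?_⟩
    · change ((↑) : ℤ → ℚ) ∘ (A *ᵥ fun i => ⌊x i⌋) = ((↑) : ℤ → ℚ) ∘ b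
      rw [intCast_comp_mulVec, ← hx]
      exact congrArg _ (funext hint)
    · have := hbox i
      rw [← hint i, mem_Icc] at this
      exact_mod_cast this
  · obtain ⟨y, hy0, hAy, hysupp⟩ := exists_mulVec_eq_zero_of_not_linearIndependent hF
    obtain ⟨t, hbox', j, hyj, hjbound⟩ := exists_add_mul_mem_Icc_and_eq_bound hbox hy0
    have hsub : fracSupport (x + t • y) ⊆ fracSupport x := fun i hi => by
      by_contra hiF
      refine notMem_fracSupport.2 ?_ hi
      simpa [hysupp i hiF] using notMem_fracSupport.1 hiF
    have hjF : j ∈ fracSupport x := by_contra fun h => hyj (hysupp j h)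
    have hj : j ∉ fracSupport (x + t • y) := by
      rw [notMem_fracSupport]
      rcases hjbound with h | h <;> simp [h]
    refine ih _ ?_ (x := x + t • y) ?_ hbox' rfl
    · rw [← hN]
      exact Finset.card_lt_card ((Finset.ssubset_iff_of_subset hsub).2 ⟨j, hjF, hj⟩)
    · rw [mulVec_add, mulVec_smul, hAy, smul_zero, add_zero, hx]

end Matrix.IsTotallyUnimodular

-- `ℤ`-division rounds down: `a / 2 = ⌊a / 2⌋` and `a - a / 2 = ⌈a / 2⌉`.
theorem div_two_mem_Icc_ediv_two (a : ℤ) :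
    (a : ℚ) / 2 ∈ Icc ((a / 2 : ℤ) : ℚ) ((a - a / 2 : ℤ) : ℚ) := by
  have h1 : 2 * (a / 2) ≤ a := by omega
  have h2 : a ≤ 2 * (a - a / 2) := by omega
  qify at h1 h2
  rw [mem_Icc]
  push_cast
  constructor <;> linarith

theorem max_le_max_of_mem_Icc_ediv_two {a v : ℤ} (h : v ∈ Icc (a / 2) (a - a / 2)) :
    max v 0 ≤ max a 0 ∧ max (-v) 0 ≤ max (-a) 0 := by
  obtain ⟨h1, h2⟩ := h
  omega

theorem ne_zero_and_ne_of_mem_Icc_ediv_two {a v : ℤ} (h : v ∈ Icc (a / 2) (a - a / 2))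
    (ha : ¬(a = -1 ∨ a = 0 ∨ a = 1)) : v ≠ 0 ∧ v ≠ a := by
  obtain ⟨h1, h2⟩ := h
  omega

theorem stmt0_general {m n : Type*} [Fintype m] [Fintype n]
    (A : Matrix m n ℤ) (hA : IsTotallyUnimodularMat A)
    (u : n → ℤ) (hu : InGraverBasis A u) :
    ∀ i, u i = -1 ∨ u i = 0 ∨ u i = 1 := by
  intro i
  by_contra hi
  obtain ⟨-, hAu, hmin⟩ := hu
  have hx : A.map (↑) *ᵥ (fun j => (u j : ℚ) / 2) = (↑) ∘ (0 : m → ℤ) := by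
    have hhalf : (fun j => (u j : ℚ) / 2) = (2 : ℚ)⁻¹ • ((↑) ∘ u) := by
      ext j
      simp [div_eq_inv_mul]
    rw [hhalf, mulVec_smul, ← intCast_comp_mulVec, hAu]
    simp
  obtain ⟨v, hAv, hv⟩ := hA.isTotallyUnimodular.exists_intVec_mulVec_eq_of_rat hx
    fun j => div_two_mem_Icc_ediv_two (u j)
  have hvi := ne_zero_and_ne_of_mem_Icc_ediv_two (hv i) hi
  exact hmin v (fun h => hvi.1 (congrFun h i)) hAv (fun h => hvi.2 (congrFun h i))
    ⟨fun j => (max_le_max_of_mem_Icc_ediv_two (hv j)).1,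
      fun j => (max_le_max_of_mem_Icc_ediv_two (hv j)).2⟩

theorem stmt0 {m n : Type*} [Fintype m] [Fintype n] [DecidableEq m] [DecidableEq n]
    (A : Matrix m n ℤ) (hA : IsTotallyUnimodularMat A)
    (u : n → ℤ) (hu : InGraverBasis A u) :
    ∀ i, u i = -1 ∨ u i = 0 ∨ u i = 1 :=
  stmt0_general A hA u hu
end

section
/- If A is a totally unimodular integer matrix, then the Lawrence lift Λ(A), defined as the block matrix [[A, 0], [I, I]], is totally unimodular. -/
open Matrix

lemma Int.mem_range_signTypeCast_iff {x : ℤ} :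
    x ∈ Set.range SignType.cast ↔ x = 0 ∨ x = 1 ∨ x = -1 := by
  constructor
  · rintro ⟨s, rfl⟩
    cases s <;> simp
  · rintro (rfl | rfl | rfl)
    exacts [⟨0, rfl⟩, ⟨1, rfl⟩, ⟨-1, rfl⟩]

lemma isTotallyUnimodularMat_iff {m n : Type*} [Fintype m] [Fintype n] (A : Matrix m n ℤ) :
    IsTotallyUnimodularMat A ↔ A.IsTotallyUnimodular := by
  simp only [IsTotallyUnimodularMat, IsTotallyUnimodular, Int.mem_range_signTypeCast_iff]

/-- Transposed, the Lawrence lift is `[[Aᵀ, 1], [0, 1]]`: the totally unimodular `[Aᵀ 1]` with unit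
rows `[0 eᵢ]` appended. -/
lemma Matrix.IsTotallyUnimodular.fromBlocks_zero_one_one {m n R : Type*} [CommRing R]
    [DecidableEq n] {A : Matrix m n R} (hA : A.IsTotallyUnimodular) :
    (fromBlocks A 0 (1 : Matrix n n R) 1 : Matrix (m ⊕ n) (n ⊕ n) R).IsTotallyUnimodular := by
  classical
  rw [← transpose_isTotallyUnimodular_iff, fromBlocks_transpose, transpose_zero, transpose_one]
  have hrows : fromBlocks Aᵀ 1 0 (1 : Matrix n n R) = fromRows (fromCols Aᵀ 1) (fromCols 0 1) := by
    ext (i | i) (j | j) <;> rfl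
  rw [hrows]
  refine hA.transpose.fromCols_one.fromRows_unitlike fun _ i ↦ ⟨Sum.inr i, 1, funext ?_⟩
  rintro (j | j) <;> simp [one_apply, Pi.single_apply, eq_comm]

/-- The Lawrence lift `[[A, 0], [I, I]]` of a totally unimodular matrix is totally unimodular. -/
theorem stmt2 {d n : ℕ} (A : Matrix (Fin d) (Fin n) ℤ) (hA : IsTotallyUnimodularMat A) :
    IsTotallyUnimodularMat
      (Matrix.fromBlocks A 0 (1 : Matrix (Fin n) (Fin n) ℤ) (1 : Matrix (Fin n) (Fin n) ℤ)) := by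
  rw [isTotallyUnimodularMat_iff] at hA ⊢
  exact IsTotallyUnimodular.fromBlocks_zero_one_one hA
end

section
/- If A is a unimodular integer matrix with full row rank, then for every b in the affine semigroup generated by the columns of A, every vertex of the polyhedron P = {x : Ax = b, x ≥ 0} has integer coordinates. -/
/-
A vertex `v` of `P` has linearly independent support columns: a kernel vector `c` supported on
the support of `v` would make `v ± ε c` two points of `P` with midpoint `v`. Since `A` has full
row rank, these columns extend to `d` columns forming an invertible submatrix `B`, and `v`
restricted to them is the unique solution of `B y = b`. By Cramer's rule `det B • y_i` is the
determinant of `B` with its `i`-th column replaced by `b = ∑ x0_j A_j`, an integer combination of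
maximal minors of `A`; unimodularity makes each of them divisible by `det B = ±λ`.
-/

/-- A full-row-rank integer matrix is unimodular if there is `l > 0` such that every maximal
minor is `0` or `±l`. -/
def IsUnimodularFR {m n : Type*} [Fintype m] [Fintype n] [DecidableEq m]
    (A : Matrix m n ℤ) : Prop :=
  LinearIndependent ℤ (fun i : m => A i) ∧
  ∃ l : ℤ, 0 < l ∧ ∀ g : m → n, Function.Injective g →
    (A.submatrix id g).det = 0 ∨ (A.submatrix id g).det = l ∨ (A.submatrix id g).det = -l

open Matrix Filter Topology

lemma mulVec_eq_sum_smul_col {R m n : Type*} [CommSemiring R] [Fintype n] (M : Matrix m n R)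
    (x : n → R) : M *ᵥ x = ∑ j, x j • M.col j := by
  simp only [mulVec_eq_sum, op_smul_eq_smul]
  rfl

section Polyhedron

variable {m n : Type*} [Fintype n]

lemma exists_pos_mul_abs_le {v c : n → ℝ} (hv0 : ∀ j, 0 ≤ v j)
    (hc : ∀ j, v j = 0 → c j = 0) :
    ∃ ε : ℝ, 0 < ε ∧ ∀ j, ε * |c j| ≤ v j := by
  have hsmall : ∀ j, ∀ᶠ ε in 𝓝 (0 : ℝ), ε * |c j| ≤ v j := by
    intro j
    by_cases hcj : c j = 0
    · exact Eventually.of_forall fun ε => by simp [hcj, hv0 j]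
    · have hpos : 0 < v j := (hv0 j).lt_of_ne' (mt (hc j) hcj)
      have hlim : Tendsto (fun ε : ℝ => ε * |c j|) (𝓝 0) (𝓝 0) := by
        simpa using (continuous_mul_const |c j|).tendsto 0
      exact (hlim.eventually (eventually_lt_nhds hpos)).mono fun _ => le_of_lt
  exact (eventually_all.2 hsmall).exists_gt

lemma linearIndepOn_col_support_of_vertex {M : Matrix m n ℝ} {b : m → ℝ} {v : n → ℝ}
    (hv : M *ᵥ v = b) (hv0 : ∀ j, 0 ≤ v j)
    (hvert : ∀ x y : n → ℝ, M *ᵥ x = b → (∀ j, 0 ≤ x j) → M *ᵥ y = b →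
      (∀ j, 0 ≤ y j) → ∀ t : ℝ, 0 < t → t < 1 → v = t • x + (1 - t) • y → x = y) :
    LinearIndepOn ℝ M.col {j | v j ≠ 0} := by
  rw [linearIndepOn_iff]
  intro c hc hMc
  have hc0 : ∀ j, v j = 0 → c j = 0 := fun j hj => Finsupp.notMem_support_iff.1 fun h => hc h hj
  replace hMc : M *ᵥ c = 0 := by
    rw [← hMc, Finsupp.linearCombination_apply, Finsupp.sum_fintype _ _ (by simp),
      mulVec_eq_sum_smul_col]
  obtain ⟨ε, hε, hεc⟩ := exists_pos_mul_abs_le hv0 hc0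
  have hsol : ∀ s : ℝ, M *ᵥ (v + s • ⇑c) = b := fun s => by
    rw [mulVec_add, mulVec_smul, hMc, smul_zero, add_zero, hv]
  have hnonneg : ∀ s : ℝ, |s| ≤ ε → ∀ j, 0 ≤ (v + s • ⇑c) j := fun s hs j => by
    have h1 := neg_abs_le (s * c j)
    rw [abs_mul] at h1
    have h2 := mul_le_mul_of_nonneg_right hs (abs_nonneg (c j))
    simp only [Pi.add_apply, Pi.smul_apply, smul_eq_mul]
    linarith [hεc j]
  have heq := hvert _ _ (hsol ε) (hnonneg ε (abs_of_pos hε).le) (hsol (-ε))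
    (hnonneg (-ε) (by rw [abs_neg, abs_of_pos hε])) (1 / 2) (by norm_num) (by norm_num)
    (by ext j; simp only [Pi.add_apply, Pi.smul_apply, smul_eq_mul]; ring)
  ext j
  have hj := congrFun heq j
  simp only [Pi.add_apply, Pi.smul_apply, smul_eq_mul] at hj
  have : ε * c j = 0 := by linarith
  simpa [hε.ne'] using this

end Polyhedron

lemma exists_injective_subset_range_isUnit_submatrix {K m n : Type*} [Field K] [Fintype m]
    [DecidableEq m] [Fintype n] (M : Matrix m n K) (hM : LinearIndependent K M.row) {S : Set n}
    (hS : LinearIndepOn K M.col S) :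
    ∃ g : m → n, Function.Injective g ∧ S ⊆ Set.range g ∧ IsUnit (M.submatrix id g) := by
  classical
  obtain ⟨B, -, hSB, hspan, hB⟩ := exists_linearIndepOn_extension hS (Set.subset_univ S)
  have hcard : Fintype.card B = Fintype.card m := by
    have hspanB : Submodule.span K (M.col '' B) = Submodule.span K (Set.range M.col) :=
      le_antisymm (Submodule.span_mono (Set.image_subset_range _ _))
        (Submodule.span_le.2 (by simpa using hspan))
    rw [linearIndependent_iff_card_eq_finrank_span.1 hB, ← Set.image_eq_range, Set.finrank,
      hspanB, ← rank_eq_finrank_span_cols, hM.rank_matrix]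
  let e : m ≃ B := (Fintype.equivOfCardEq hcard).symm
  refine ⟨(↑) ∘ e, Subtype.val_injective.comp e.injective,
    fun j hj => ⟨e.symm ⟨j, hSB hj⟩, by simp⟩, ?_⟩
  rw [← linearIndependent_cols_iff_isUnit]
  exact hB.comp e e.injective

lemma updateCol_submatrix_id {R m n : Type*} [DecidableEq m] (A : Matrix m n R) (g : m → n)
    (i : m) (j : n) :
    (A.submatrix id g).updateCol i (A.col j) = A.submatrix id (Function.update g i j) := by
  ext a k
  rcases eq_or_ne k i with rfl | hk
  · simp
  · simp [hk]

section Cramer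

variable {R m n : Type*} [CommRing R] [Fintype m] [DecidableEq m]

lemma det_submatrix_eq_zero_of_not_injective (A : Matrix m n R) {g : m → n}
    (hg : ¬ Function.Injective g) : (A.submatrix id g).det = 0 := by
  obtain ⟨a, c, hac, hne⟩ : ∃ a c, g a = g c ∧ a ≠ c := by
    simpa [Function.Injective] using hg
  exact det_zero_of_column_eq hne fun k => by simp [hac]

lemma dvd_cramer_submatrix_mulVec [Fintype n] (A : Matrix m n R) {l : R}
    (hl : ∀ g : m → n, Function.Injective g → l ∣ (A.submatrix id g).det) (g : m → n)
    (x : n → R) (i : m) : l ∣ cramer (A.submatrix id g) (A *ᵥ x) i := by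
  classical
  rw [mulVec_eq_sum_smul_col, map_sum, Finset.sum_apply]
  refine Finset.dvd_sum fun j _ => ?_
  rw [map_smul, Pi.smul_apply, cramer_apply, updateCol_submatrix_id, smul_eq_mul]
  refine Dvd.dvd.mul_left ?_ _
  by_cases hg : Function.Injective (Function.update g i j)
  · exact hl _ hg
  · rw [det_submatrix_eq_zero_of_not_injective A hg]
    exact dvd_zero l

lemma exists_mulVec_eq_of_det_dvd_cramer [IsDomain R] {B : Matrix m m R} (hB : B.det ≠ 0)
    {y : m → R} (h : ∀ i, B.det ∣ cramer B y i) : ∃ z, B *ᵥ z = y := by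
  choose z hz using h
  have hcramer : B.det • z = cramer B y := funext fun i => (hz i).symm
  refine ⟨z, smul_right_injective (m → R) hB (?_ : B.det • (B *ᵥ z) = B.det • y)⟩
  rw [← mulVec_smul, hcramer, mulVec_cramer]

end Cramer

namespace IsUnimodularFR

variable {m n : Type*} [Fintype m] [DecidableEq m] [Fintype n] {A : Matrix m n ℤ}

lemma det_submatrix_dvd (hA : IsUnimodularFR A) {g g' : m → n}
    (hg : (A.submatrix id g).det ≠ 0) (hg' : Function.Injective g') :
    (A.submatrix id g).det ∣ (A.submatrix id g').det := by
  obtain ⟨-, l, -, hminor⟩ := hA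
  have hginj : Function.Injective g :=
    not_not.1 (mt (det_submatrix_eq_zero_of_not_injective A) hg)
  rcases hminor g hginj with h | h | h
  · exact absurd h hg
  all_goals rcases hminor g' hg' with h' | h' | h' <;> simp [h, h']

lemma exists_mulVec_submatrix_eq (hA : IsUnimodularFR A) {g : m → n}
    (hg : (A.submatrix id g).det ≠ 0) (x : n → ℤ) :
    ∃ z, A.submatrix id g *ᵥ z = A *ᵥ x :=
  exists_mulVec_eq_of_det_dvd_cramer hg fun i =>
    dvd_cramer_submatrix_mulVec A (fun _ hg' => hA.det_submatrix_dvd hg hg') g x i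

end IsUnimodularFR

lemma mulVec_eq_submatrix_mulVec_comp {R l m n : Type*} [NonUnitalNonAssocSemiring R] [Fintype m]
    [Fintype n] (M : Matrix l n R) {g : m → n} (hg : Function.Injective g) {v : n → R}
    (hv : ∀ j, v j ≠ 0 → j ∈ Set.range g) : M *ᵥ v = M.submatrix id g *ᵥ (v ∘ g) :=
  funext fun i => (Fintype.sum_of_injective g hg _ _
    (fun j hj => by rw [not_not.1 (mt (hv j) hj), mul_zero]) fun _ => rfl).symm

/-- For a unimodular full-row-rank matrix `A` and any `b` in the affine semigroup generated by
the columns of `A` (i.e. `b = A x₀` for a nonnegative integer vector `x₀`), every vertex of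
`P = {x : Ax = b, x ≥ 0}` is integral. -/
theorem stmt6 {d n : ℕ} (A : Matrix (Fin d) (Fin n) ℤ) (hA : IsUnimodularFR A)
    (x0 : Fin n → ℕ) (b : Fin d → ℤ) (hb : b = A.mulVec fun j => (x0 j : ℤ))
    (v : Fin n → ℝ)
    (hv : (A.map (Int.cast : ℤ → ℝ)).mulVec v = fun i => (b i : ℝ)) (hv0 : ∀ i, 0 ≤ v i)
    (hvert : ∀ x y : Fin n → ℝ,
      (A.map (Int.cast : ℤ → ℝ)).mulVec x = (fun i => (b i : ℝ)) → (∀ i, 0 ≤ x i) →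
      (A.map (Int.cast : ℤ → ℝ)).mulVec y = (fun i => (b i : ℝ)) → (∀ i, 0 ≤ y i) →
      ∀ t : ℝ, 0 < t → t < 1 → v = t • x + (1 - t) • y → x = y) :
    ∀ i, ∃ z : ℤ, v i = (z : ℝ) := by
  have hrows : LinearIndependent ℝ (A.map (Int.cast : ℤ → ℝ)).row := by
    convert linearIndependent_algebraMap_comp_iff (S := ℝ) |>.2 hA.1 using 1
    · ext i j
      simp
    · rfl
  obtain ⟨g, hg, hsupp, hunit⟩ := exists_injective_subset_range_isUnit_submatrix _ hrows
    (linearIndepOn_col_support_of_vertex hv hv0 hvert)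
  have hdet : (A.submatrix id g).det ≠ 0 := by
    have := ((isUnit_iff_isUnit_det _).1 hunit).ne_zero
    rwa [submatrix_map, ← Int.cast_det, Int.cast_ne_zero] at this
  obtain ⟨z, hz⟩ := hA.exists_mulVec_submatrix_eq hdet fun j => (x0 j : ℤ)
  have hvz : v ∘ g = fun k => (z k : ℝ) := by
    refine mulVec_injective_iff_isUnit.2 hunit ?_
    rw [← mulVec_eq_submatrix_mulVec_comp _ hg hsupp, hv, hb, ← hz]
    ext i
    exact RingHom.map_mulVec (Int.castRingHom ℝ) _ z i
  intro i
  by_cases hi : i ∈ Set.range g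
  · obtain ⟨k, rfl⟩ := hi
    exact ⟨z k, congrFun hvz k⟩
  · exact ⟨0, by simpa using not_not.1 (mt (hsupp ·) hi)⟩
end

section
/- A vector u with entries in {-1,0,1} lies in the integer kernel of the vertex-arc incidence matrix of a directed graph G and has minimal support among nonzero kernel elements if and only if the support of u is the edge set of a simple cycle of the underlying undirected graph, with u_e = +1 on edges traversed in their orientation and u_e = -1 on edges traversed against their orientation (up to global sign). -/
/-!
Call a kernel vector of the incidence matrix a flow. By Kirchhoff's law at a vertex `v`, a
non-loop support arc of a flow at `v` is never the only one there. Hence from any support arc one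
can keep walking along support arcs without ever reusing the arc just traversed; by finiteness the
walk closes up, and its shortest closed segment is a cycle inside the support. Conversely,
every vertex of a cycle meets exactly two of its arcs, so a flow supported on a cycle is a constant
multiple of the signed vector of the cycle, and its support is either empty or the whole cycle.

A support-minimal flow `u` therefore has a cycle as its support and is a multiple of that cycle's
signed vector, the multiple being `±1` because `u` takes values in `{-1, 0, 1}`; and the signed
vector of a cycle is a flow whose support cannot shrink.
-/

section

open Finset Function Matrix

theorem exists_ne_mul_ne_zero_of_mulVec_apply_eq_zero {ν κ R : Type*} [Fintype κ]
    [NonUnitalNonAssocSemiring R] {M : Matrix ν κ R} {w : κ → R} {v : ν} {e : κ}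
    (h : (M *ᵥ w) v = 0) (he : M v e * w e ≠ 0) : ∃ e' ≠ e, M v e' * w e' ≠ 0 := by
  classical
  have hrest : ∑ e' ∈ univ.erase e, M v e' * w e' ≠ 0 := by
    intro hzero
    rw [← h, Matrix.mulVec, dotProduct, ← add_sum_erase _ _ (mem_univ e), hzero, add_zero] at he
    exact he rfl
  obtain ⟨e', he', hne⟩ := exists_ne_zero_of_sum_ne_zero hrest
  exact ⟨e', ne_of_mem_erase he', hne⟩

theorem mulVec_apply_of_support_subset_range {ν κ ι R : Type*} [Fintype κ] [Fintype ι]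
    [NonUnitalNonAssocSemiring R] (M : Matrix ν κ R) {es : ι → κ} (hes : Injective es)
    {w : κ → R} (hw : support w ⊆ Set.range es) (v : ν) :
    (M *ᵥ w) v = ∑ t, M v (es t) * w (es t) :=
  (Fintype.sum_of_injective es hes _ _
    (fun e he => by simp [support_subset_iff'.1 hw e he]) fun _ => rfl).symm

theorem Fin.apply_eq_apply_zero_of_forall_apply_add_one {α : Type*} {m : ℕ} [NeZero m]
    {g : Fin m → α} (h : ∀ k, g (k + 1) = g k) (k : Fin m) : g k = g 0 := by
  obtain ⟨n, rfl⟩ := Nat.exists_eq_succ_of_ne_zero (NeZero.ne m)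
  induction k using Fin.induction with
  | zero => rfl
  | succ i ih => rw [← Fin.coeSucc_eq_succ, h, ih]

variable {V E : Type*} (head tail : E → V)

def incidenceMatrix [DecidableEq V] : Matrix V E ℤ :=
  Matrix.of fun v e => (if v = head e then 1 else 0) - (if v = tail e then 1 else 0)

def Joins (e : E) (a b : V) : Prop :=
  tail e = a ∧ head e = b ∨ head e = a ∧ tail e = b

def IsCycle {m : ℕ} [NeZero m] (vs : Fin m → V) (es : Fin m → E) : Prop :=
  Injective vs ∧ Injective es ∧ ∀ k, Joins head tail (es k) (vs k) (vs (k + 1))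

def cycleSign [DecidableEq V] {m : ℕ} [NeZero m] (vs : Fin m → V) (es : Fin m → E)
    (k : Fin m) : ℤ :=
  if tail (es k) = vs k ∧ head (es k) = vs (k + 1) then 1 else -1

variable {head tail}

theorem Joins.eq_and_eq_or_eq_and_eq {e : E} {a b c d : V} (h₁ : Joins head tail e a b)
    (h₂ : Joins head tail e c d) : a = c ∧ b = d ∨ a = d ∧ b = c := by
  unfold Joins at h₁ h₂
  aesop

section Incidence

variable [DecidableEq V]

theorem exists_joins_of_incidenceMatrix_ne_zero {v : V} {e : E}
    (h : incidenceMatrix head tail v e ≠ 0) :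
    ∃ v', Joins head tail e v v' ∧ incidenceMatrix head tail v' e ≠ 0 := by
  simp only [incidenceMatrix, Matrix.of_apply] at h ⊢
  by_cases hh : v = head e
  · subst hh
    refine ⟨tail e, Or.inr ⟨rfl, rfl⟩, ?_⟩
    by_cases hloop : tail e = head e <;> simp_all
  · have ht : v = tail e := by by_contra ht; simp [hh, ht] at h
    subst ht
    refine ⟨head e, Or.inl ⟨rfl, rfl⟩, ?_⟩
    simp [Ne.symm hh]

variable (head tail) in
theorem cycleSign_eq_one_or_eq_neg_one {m : ℕ} [NeZero m] (vs : Fin m → V) (es : Fin m → E)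
    (k : Fin m) : cycleSign head tail vs es k = 1 ∨ cycleSign head tail vs es k = -1 := by
  unfold cycleSign
  split_ifs <;> simp

variable (head tail) in
theorem cycleSign_mul_self {m : ℕ} [NeZero m] (vs : Fin m → V) (es : Fin m → E) (k : Fin m) :
    cycleSign head tail vs es k * cycleSign head tail vs es k = 1 := by
  rcases cycleSign_eq_one_or_eq_neg_one head tail vs es k with h | h <;> simp [h]

variable (head tail) in
theorem eq_mul_cycleSign_iff {m : ℕ} [NeZero m] (vs : Fin m → V) (es : Fin m → E) (k : Fin m)
    (x ε : ℤ) :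
    x = ε * cycleSign head tail vs es k ↔
      (tail (es k) = vs k ∧ head (es k) = vs (k + 1) → x = ε) ∧
      (¬(tail (es k) = vs k ∧ head (es k) = vs (k + 1)) → x = -ε) := by
  unfold cycleSign
  split_ifs with h <;> simp [h]

theorem incidenceMatrix_apply_of_joins {m : ℕ} [NeZero m] {vs : Fin m → V} {es : Fin m → E}
    {k : Fin m} (h : Joins head tail (es k) (vs k) (vs (k + 1))) (v : V) :
    incidenceMatrix head tail v (es k) = cycleSign head tail vs es k *
      ((if v = vs (k + 1) then 1 else 0) - (if v = vs k then 1 else 0)) := by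
  unfold incidenceMatrix cycleSign
  rcases h with ⟨ht, hh⟩ | ⟨hh, ht⟩
  · simp [ht, hh]
  · by_cases hloop : vs k = vs (k + 1)
    · simp [hh, ht, hloop]
    · simp [hh, ht, Ne.symm hloop]

end Incidence

section Cycle

variable [DecidableEq V] {m : ℕ} [NeZero m] {vs : Fin m → V} {es : Fin m → E} {w : E → ℤ}

theorem support_eq_range_of_eq_mul_cycleSign (hw : support w ⊆ Set.range es) {c : ℤ}
    (hc : c ≠ 0) (h : ∀ k, w (es k) = c * cycleSign head tail vs es k) :
    support w = Set.range es := by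
  refine hw.antisymm (Set.range_subset_iff.2 fun k hk => ?_)
  have := cycleSign_mul_self head tail vs es k
  rw [h k] at hk
  simp_all

variable [Fintype E]

theorem IsCycle.incidenceMatrix_mulVec_apply (hc : IsCycle head tail vs es)
    (hw : support w ⊆ Set.range es) (v : V) :
    (incidenceMatrix head tail *ᵥ w) v = ∑ t, cycleSign head tail vs es t * w (es t) *
      ((if v = vs (t + 1) then 1 else 0) - (if v = vs t then 1 else 0)) := by
  rw [mulVec_apply_of_support_subset_range _ hc.2.1 hw]
  refine sum_congr rfl fun t _ => ?_
  rw [incidenceMatrix_apply_of_joins (hc.2.2 t)]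
  ring

theorem IsCycle.incidenceMatrix_mulVec_eq_zero_iff (hc : IsCycle head tail vs es)
    (hw : support w ⊆ Set.range es) :
    incidenceMatrix head tail *ᵥ w = 0 ↔
      ∃ c, ∀ k, w (es k) = c * cycleSign head tail vs es k := by
  have hσ := cycleSign_mul_self head tail vs es
  constructor
  · intro h
    have hshift : ∀ k, cycleSign head tail vs es (k + 1) * w (es (k + 1)) =
        cycleSign head tail vs es k * w (es k) := by
      intro k
      -- Kirchhoff's law at `vs (k + 1)`, which meets only the cycle arcs `es k` and `es (k + 1)`
      have hk := congrFun h (vs (k + 1))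
      simp [hc.incidenceMatrix_mulVec_apply hw, hc.1.eq_iff, mul_sub, sum_sub_distrib] at hk
      linarith
    refine ⟨cycleSign head tail vs es 0 * w (es 0), fun k => ?_⟩
    have hk := Fin.apply_eq_apply_zero_of_forall_apply_add_one
      (g := fun t => cycleSign head tail vs es t * w (es t)) hshift k
    rw [← hk]
    linear_combination (-w (es k)) * hσ k
  · rintro ⟨c, hc'⟩
    have hterm : ∀ t, cycleSign head tail vs es t * w (es t) = c := fun t => by
      rw [hc' t, mul_left_comm, hσ, mul_one]
    ext v
    have hshift :
        ∑ t, (if v = vs (t + 1) then (1 : ℤ) else 0) = ∑ t, if v = vs t then 1 else 0 :=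
      Equiv.sum_comp (Equiv.addRight 1) fun t => if v = vs t then 1 else 0
    rw [hc.incidenceMatrix_mulVec_apply hw]
    simp only [hterm, ← mul_sum, Pi.zero_apply]
    rw [sum_sub_distrib, hshift, sub_self, mul_zero]

theorem IsCycle.support_eq_range_of_mulVec_eq_zero (hc : IsCycle head tail vs es) (hw0 : w ≠ 0)
    (hw : support w ⊆ Set.range es) (hker : incidenceMatrix head tail *ᵥ w = 0) :
    support w = Set.range es := by
  obtain ⟨c, hc'⟩ := (hc.incidenceMatrix_mulVec_eq_zero_iff hw).1 hker
  refine support_eq_range_of_eq_mul_cycleSign hw ?_ hc'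
  rintro rfl
  refine hw0 (funext fun e => ?_)
  by_cases he : e ∈ Set.range es
  · obtain ⟨k, rfl⟩ := he
    simp [hc']
  · exact support_subset_iff'.1 hw e he

theorem IsCycle.exists_mulVec_eq_zero_support_eq_range (hc : IsCycle head tail vs es) :
    ∃ z : E → ℤ, incidenceMatrix head tail *ᵥ z = 0 ∧ support z = Set.range es := by
  set z := extend es (cycleSign head tail vs es) 0
  have hz : support z ⊆ Set.range es := support_subset_iff'.2 fun e he => extend_apply' _ _ _ he
  have hzk : ∀ k, z (es k) = 1 * cycleSign head tail vs es k := fun k => by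
    rw [one_mul]
    exact hc.2.1.extend_apply _ _ _
  exact ⟨z, (hc.incidenceMatrix_mulVec_eq_zero_iff hz).2 ⟨1, hzk⟩,
    support_eq_range_of_eq_mul_cycleSign hz one_ne_zero hzk⟩

end Cycle

theorem exists_isCycle_of_walk [Finite V] {vq : ℕ → V} {eg : ℕ → E}
    (hjoin : ∀ n, Joins head tail (eg n) (vq n) (vq (n + 1)))
    (hback : ∀ n, eg (n + 1) ≠ eg n) :
    ∃ m, ∃ _ : NeZero m, ∃ (vs : Fin m → V) (es : Fin m → E),
      IsCycle head tail vs es ∧ Set.range es ⊆ Set.range eg := by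
  classical
  have hrep : ∃ m, 0 < m ∧ ∃ i, vq (i + m) = vq i := by
    obtain ⟨a, b, hab, h⟩ := Finite.exists_ne_map_eq_of_infinite vq
    rcases hab.lt_or_gt with hlt | hlt
    · exact ⟨b - a, by omega, a, by rw [Nat.add_sub_cancel' hlt.le, h]⟩
    · exact ⟨a - b, by omega, b, by rw [Nat.add_sub_cancel' hlt.le, h]⟩
  obtain ⟨m, ⟨hpos, i, hi⟩, hmin⟩ : ∃ m, (0 < m ∧ ∃ i, vq (i + m) = vq i) ∧
      ∀ m' < m, ¬(0 < m' ∧ ∃ i, vq (i + m') = vq i) :=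
    ⟨Nat.find hrep, Nat.find_spec hrep, fun _ => Nat.find_min hrep⟩
  obtain ⟨n, rfl⟩ := Nat.exists_eq_succ_of_ne_zero hpos.ne'
  -- the shortest closed segment `vq i, …, vq (i + n + 1) = vq i` of the walk
  set vs : Fin (n + 1) → V := fun t => vq (i + t)
  set es : Fin (n + 1) → E := fun t => eg (i + t)
  have hvs_add_one : ∀ t : Fin (n + 1), vs (t + 1) = vq (i + t + 1) := by
    intro t
    simp only [vs, Fin.val_add_one]
    split_ifs with ht
    · rw [ht, Fin.val_last, add_zero, ← hi]
      rfl
    · rfl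
  have hjoins : ∀ t, Joins head tail (es t) (vs t) (vs (t + 1)) := fun t => by
    rw [hvs_add_one]
    exact hjoin (i + t)
  have hvs : Injective vs := Injective.of_lt_imp_ne fun a b hab h => by
    have hab' : (a : ℕ) < b := hab
    refine hmin (b - a) (by omega) ⟨by omega, i + a, ?_⟩
    rw [show i + a + (b - a) = i + b by omega]
    exact h.symm
  have hes : Injective es := by
    intro a b h
    by_contra hab
    rcases (hjoins a).eq_and_eq_or_eq_and_eq (h ▸ hjoins b) with ⟨h₁, -⟩ | ⟨h₁, h₂⟩
    · exact hab (hvs h₁)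
    have hba := congrArg Fin.val (hvs h₁)
    have hab₁ := congrArg Fin.val (hvs h₂)
    rw [Fin.val_add_one] at hba hab₁
    have hne := Fin.val_ne_of_ne hab
    -- `a = b + 1` and `b = a + 1` in `Fin (n + 1)` force `a` and `b` to be neighbours in `ℕ`
    have hadj : (a : ℕ) + 1 = b ∨ (b : ℕ) + 1 = a := by
      split_ifs at hba with hb <;> split_ifs at hab₁ with ha <;>
        simp only [Fin.ext_iff, Fin.val_last] at ha hb <;> omega
    rcases hadj with hadj | hadj
    · exact hback (i + a) (by rw [add_assoc, hadj]; exact h.symm)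
    · exact hback (i + b) (by rw [add_assoc, hadj]; exact h)
  refine ⟨n + 1, inferInstance, vs, es, ⟨hvs, hes, hjoins⟩, ?_⟩
  rintro _ ⟨t, rfl⟩
  exact ⟨_, rfl⟩

section Walk

variable [DecidableEq V] [Fintype E] {w : E → ℤ}

theorem exists_walk_of_mulVec_eq_zero (hker : incidenceMatrix head tail *ᵥ w = 0) {v : V} {e : E}
    (hve : incidenceMatrix head tail v e ≠ 0) (hwe : w e ≠ 0) :
    ∃ (vq : ℕ → V) (eg : ℕ → E), (∀ n, Joins head tail (eg n) (vq n) (vq (n + 1))) ∧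
      (∀ n, eg (n + 1) ≠ eg n) ∧ ∀ n, w (eg n) ≠ 0 := by
  -- the current vertex, together with the support arc just used to reach it
  let State := {p : V × E // incidenceMatrix head tail p.1 p.2 * w p.2 ≠ 0}
  have step :
      ∀ p : State, ∃ q : State, q.1.2 ≠ p.1.2 ∧ Joins head tail q.1.2 p.1.1 q.1.1 := by
    rintro ⟨⟨v, e⟩, hp⟩
    obtain ⟨e', hne, he'⟩ := exists_ne_mul_ne_zero_of_mulVec_apply_eq_zero (congrFun hker v) hp
    obtain ⟨v', hj, hv'⟩ := exists_joins_of_incidenceMatrix_ne_zero (left_ne_zero_of_mul he')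
    exact ⟨⟨(v', e'), mul_ne_zero hv' (right_ne_zero_of_mul he')⟩, hne, hj⟩
  choose next hnext using step
  let s : ℕ → State := fun n => next^[n] ⟨(v, e), mul_ne_zero hve hwe⟩
  have hs : ∀ n, s (n + 1) = next (s n) := fun n => iterate_succ_apply' next n _
  refine ⟨fun n => (s n).1.1, fun n => (s (n + 1)).1.2, fun n => ?_, fun n => ?_,
    fun n => right_ne_zero_of_mul (s (n + 1)).2⟩
  · simp only [hs n]
    exact (hnext (s n)).2
  · simp only [hs (n + 1)]
    exact (hnext (s (n + 1))).1

theorem exists_isCycle_of_mulVec_eq_zero [Finite V] (hw : w ≠ 0)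
    (hker : incidenceMatrix head tail *ᵥ w = 0) :
    ∃ m, ∃ _ : NeZero m, ∃ (vs : Fin m → V) (es : Fin m → E),
      IsCycle head tail vs es ∧ Set.range es ⊆ support w := by
  obtain ⟨e, he⟩ := Function.ne_iff.1 hw
  by_cases hloop : head e = tail e
  · refine ⟨1, inferInstance, fun _ => head e, fun _ => e, ⟨injective_of_subsingleton _,
      injective_of_subsingleton _, fun _ => Or.inl ⟨hloop.symm, rfl⟩⟩, ?_⟩
    rintro _ ⟨_, rfl⟩
    exact he
  · obtain ⟨vq, eg, hjoin, hback, hsupp⟩ := exists_walk_of_mulVec_eq_zero hker (v := head e)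
      (by simp [incidenceMatrix, hloop]) he
    obtain ⟨m, hm, vs, es, hc, hrange⟩ := exists_isCycle_of_walk hjoin hback
    exact ⟨m, hm, vs, es, hc, hrange.trans (Set.range_subset_iff.2 hsupp)⟩

end Walk

end

/-- A `{-1,0,1}`-vector `u` lies in the integer kernel of the vertex-arc incidence matrix of a
directed graph with inclusion-minimal support among nonzero kernel vectors if and only if the
support of `u` is the edge set of a simple cycle of the underlying undirected graph, with
`u_e = +1` on edges traversed in their orientation and `u_e = -1` on edges traversed against
their orientation, up to a global sign `ε`. -/
theorem stmt8 {V E : Type*} [Fintype V] [Fintype E] [DecidableEq V]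
    (head tail : E → V) (M : Matrix V E ℤ)
    (hM : ∀ v e, M v e = (if v = head e then (1 : ℤ) else 0) - (if v = tail e then 1 else 0))
    (u : E → ℤ) (hu : ∀ e, u e = -1 ∨ u e = 0 ∨ u e = 1) :
    (u ≠ 0 ∧ M.mulVec u = 0 ∧
      ∀ w : E → ℤ, w ≠ 0 → M.mulVec w = 0 →
        {e | w e ≠ 0} ⊆ {e | u e ≠ 0} → {e | w e ≠ 0} = {e | u e ≠ 0})
    ↔ ∃ (m : ℕ) (_ : NeZero m) (vs : Fin m → V) (es : Fin m → E) (ε : ℤ),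
        (ε = 1 ∨ ε = -1) ∧ Function.Injective vs ∧ Function.Injective es ∧
        (∀ k : Fin m, (tail (es k) = vs k ∧ head (es k) = vs (k + 1)) ∨
          (head (es k) = vs k ∧ tail (es k) = vs (k + 1))) ∧
        (∀ e, e ∉ Set.range es → u e = 0) ∧
        (∀ k : Fin m,
          (tail (es k) = vs k ∧ head (es k) = vs (k + 1) → u (es k) = ε) ∧
          (¬(tail (es k) = vs k ∧ head (es k) = vs (k + 1)) → u (es k) = -ε)) := by
  obtain rfl : M = incidenceMatrix head tail := Matrix.ext hM
  constructor
  · rintro ⟨hu0, hker, hmin⟩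
    obtain ⟨m, _, vs, es, hc, hcu⟩ := exists_isCycle_of_mulVec_eq_zero hu0 hker
    obtain ⟨z, hzker, hz⟩ := hc.exists_mulVec_eq_zero_support_eq_range
    have hzu := hmin z (Function.support_nonempty_iff.1 (hz ▸ Set.range_nonempty es)) hzker
      (hz.le.trans hcu)
    have hsupp : Function.support u = Set.range es := hzu.symm.trans hz
    obtain ⟨c, hc'⟩ := (hc.incidenceMatrix_mulVec_eq_zero_iff hsupp.le).1 hker
    have hc1 : c = 1 ∨ c = -1 := by
      have h0 : u (es 0) ≠ 0 := hsupp.ge (Set.mem_range_self 0)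
      have := hu (es 0)
      rw [hc' 0] at h0 this
      rcases cycleSign_eq_one_or_eq_neg_one head tail vs es 0 with hσ | hσ <;>
        rw [hσ] at h0 this <;> omega
    exact ⟨m, ‹_›, vs, es, c, hc1, hc.1, hc.2.1, hc.2.2,
      Function.support_subset_iff'.1 hsupp.le,
      fun k => (eq_mul_cycleSign_iff head tail vs es k _ c).1 (hc' k)⟩
  · rintro ⟨m, _, vs, es, ε, hε, hvs, hes, hor, hoff, hon⟩
    have hc : IsCycle head tail vs es := ⟨hvs, hes, hor⟩
    have hsupp : Function.support u ⊆ Set.range es := Function.support_subset_iff'.2 hoff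
    have huε : ∀ k, u (es k) = ε * cycleSign head tail vs es k := fun k =>
      (eq_mul_cycleSign_iff head tail vs es k _ ε).2 (hon k)
    have hε0 : ε ≠ 0 := by rcases hε with rfl | rfl <;> norm_num
    have hsuppu := support_eq_range_of_eq_mul_cycleSign hsupp hε0 huε
    refine ⟨Function.support_nonempty_iff.1 (hsuppu ▸ Set.range_nonempty es),
      (hc.incidenceMatrix_mulVec_eq_zero_iff hsupp).2 ⟨ε, huε⟩, fun w hw hker hwu => ?_⟩
    exact (hc.support_eq_range_of_mulVec_eq_zero hw (hwu.trans hsuppu.le) hker).trans hsuppu.symm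
end

section
/- Let A ∈ Z^(d×n) and let Λ_2(A) = [[A,0],[I,I]] be its Lawrence lift. Then a vector lies in the Graver basis of Λ_2(A) if and only if it has the form (u, -u) where u lies in the Graver basis of A. -/
open Matrix

section SumElimNeg

variable {ι R : Type*}

def ConformalLE (w u : ι → ℤ) : Prop :=
  (∀ i, max (w i) 0 ≤ max (u i) 0) ∧ ∀ i, max (-w i) 0 ≤ max (-u i) 0

theorem conformalLE_sumElim_neg_iff {w u : ι → ℤ} :
    ConformalLE (Sum.elim w (-w)) (Sum.elim u (-u)) ↔ ConformalLE w u := by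
  simp only [ConformalLE, Sum.forall, Sum.elim_inl, Sum.elim_inr, Pi.neg_apply, neg_neg]
  tauto

variable [AddGroup R]

theorem sumElim_neg_injective : Function.Injective fun u : ι → R ↦ Sum.elim u (-u) :=
  fun _ _ h ↦ funext fun i ↦ congrFun h (Sum.inl i)

theorem sumElim_neg_eq_zero_iff {u : ι → R} : Sum.elim u (-u) = 0 ↔ u = 0 :=
  sumElim_neg_injective.eq_iff' (by simp)

end SumElimNeg

section LawrenceLift

variable {m n R : Type*} [Fintype n] [DecidableEq n] [Ring R]

def lawrenceLift (A : Matrix m n R) : Matrix (m ⊕ n) (n ⊕ n) R :=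
  fromBlocks A 0 1 1

theorem lawrenceLift_mulVec_sumElim (A : Matrix m n R) (x y : n → R) :
    lawrenceLift A *ᵥ Sum.elim x y = Sum.elim (A *ᵥ x) (x + y) := by
  simp [lawrenceLift, fromBlocks_mulVec]

theorem lawrenceLift_mulVec_sumElim_neg_eq_zero_iff (A : Matrix m n R) (u : n → R) :
    lawrenceLift A *ᵥ Sum.elim u (-u) = 0 ↔ A *ᵥ u = 0 := by
  simp only [lawrenceLift_mulVec_sumElim, add_neg_cancel, ← Sum.elim_zero_zero, Sum.elim_eq_iff,
    and_true]

theorem lawrenceLift_mulVec_eq_zero_iff (A : Matrix m n R) (v : n ⊕ n → R) :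
    lawrenceLift A *ᵥ v = 0 ↔ ∃ u, A *ᵥ u = 0 ∧ v = Sum.elim u (-u) := by
  obtain ⟨x, y, rfl⟩ : ∃ x y, v = Sum.elim x y := ⟨v ∘ Sum.inl, v ∘ Sum.inr, by simp⟩
  simp only [lawrenceLift_mulVec_sumElim, ← Sum.elim_zero_zero, Sum.elim_eq_iff,
    add_eq_zero_iff_eq_neg']
  exact ⟨fun ⟨hx, hy⟩ ↦ ⟨x, hx, rfl, hy⟩, fun ⟨u, hu, hx, hy⟩ ↦ hx ▸ ⟨hu, hy⟩⟩

theorem inGraverBasis_lawrenceLift_sumElim_neg_iff [Fintype m] (A : Matrix m n ℤ) (u : n → ℤ) :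
    InGraverBasis (lawrenceLift A) (Sum.elim u (-u)) ↔ InGraverBasis A u := by
  refine and_congr sumElim_neg_eq_zero_iff.not <|
    and_congr (lawrenceLift_mulVec_sumElim_neg_eq_zero_iff A u)
      ⟨fun h w hw0 hAw hwu hconf ↦ ?_, fun h v hv0 hv hvu hconf ↦ ?_⟩
  · exact h _ (sumElim_neg_eq_zero_iff.not.2 hw0)
      ((lawrenceLift_mulVec_sumElim_neg_eq_zero_iff A w).2 hAw) (sumElim_neg_injective.ne hwu)
      (conformalLE_sumElim_neg_iff.2 hconf)
  · obtain ⟨w, hAw, rfl⟩ := (lawrenceLift_mulVec_eq_zero_iff A v).1 hv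
    exact h w (sumElim_neg_eq_zero_iff.not.1 hv0) hAw (sumElim_neg_injective.ne_iff.1 hvu)
      (conformalLE_sumElim_neg_iff.1 hconf)

end LawrenceLift

/-- A vector lies in the Graver basis of the Lawrence lift `Λ₂(A) = [[A,0],[I,I]]` if and only
if it has the form `(u, -u)` with `u` in the Graver basis of `A`. -/
theorem stmt9 {d n : ℕ} (A : Matrix (Fin d) (Fin n) ℤ) (v : Fin n ⊕ Fin n → ℤ) :
    InGraverBasis
      (Matrix.fromBlocks A 0 (1 : Matrix (Fin n) (Fin n) ℤ) (1 : Matrix (Fin n) (Fin n) ℤ)) v ↔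
    ∃ u : Fin n → ℤ, InGraverBasis A u ∧ v = Sum.elim u (-u) := by
  constructor
  · intro hv
    obtain ⟨u, -, rfl⟩ := (lawrenceLift_mulVec_eq_zero_iff A v).1 hv.2.1
    exact ⟨u, (inGraverBasis_lawrenceLift_sumElim_neg_iff A u).1 hv, rfl⟩
  · rintro ⟨u, hu, rfl⟩
    exact (inGraverBasis_lawrenceLift_sumElim_neg_iff A u).2 hu
end

section
/- The design matrix of the hierarchical model with simplicial complex C having facets {1,2},{1,3},{2,3} on ground set {1,2,3} and weights d = (3,3,3) is not unimodular: its Graver basis contains a vector with an entry of absolute value at least 2. -/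
/-- Row index type of the design matrix of a hierarchical model: pairs `(F, j)` with `F` a face
and `j ∈ ∏_{v ∈ F} [d_v - 1]`. -/
abbrev DRow {V : Type*} [DecidableEq V] (faces : Finset (Finset V)) (d : V → ℕ) : Type _ :=
  Σ F : {F : Finset V // F ∈ faces}, ∀ v : {x : V // x ∈ F.1}, Fin (d v.1 - 1)

/-- The design matrix `A_{C,d}` of a hierarchical model: the `(F,j)` entry of column `i` is `1`
if `F = ∅` or `i_v = j_v` for all `v ∈ F`, and `0` otherwise. -/
def designMatrix {V : Type*} [Fintype V] [DecidableEq V]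
    (faces : Finset (Finset V)) (d : V → ℕ) :
    Matrix (DRow faces d) (∀ v : V, Fin (d v)) ℤ :=
  fun r c => if ∀ v : {x : V // x ∈ r.1.1}, (c v.1 : ℕ) = (r.2 v : ℕ) then 1 else 0

/-!
The vector `u = triangleCircuit` below, with `u (0,0,0) = -2`, lies in the kernel of the design
matrix `A`, and the rows of `A` leave no freedom on its support: a kernel vector vanishing off
`supp u` is determined by its value at `(0,0,1)`, so it is an integer multiple of `u`. Hence `u` is
a circuit, and circuits are in the Graver basis: a kernel vector `v` conformal to `u` has
`supp v ⊆ supp u`, so `v = t • u`, and conformality forces `t ∈ {0, 1}`.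
-/

open Matrix Finset

theorem Int.eq_zero_or_one_of_conformal {a t : ℤ} (ha : a ≠ 0)
    (hpos : max (t * a) 0 ≤ max a 0) (hneg : max (-(t * a)) 0 ≤ max (-a) 0) : t = 0 ∨ t = 1 := by
  rcases ha.lt_or_gt with h | h
  · rw [max_eq_right h.le, max_le_iff] at hpos
    rw [max_eq_left (neg_nonneg.mpr h.le), max_le_iff] at hneg
    have : 0 ≤ t := by nlinarith
    have : t ≤ 1 := by nlinarith
    omega
  · rw [max_eq_left h.le, max_le_iff] at hpos
    rw [max_eq_right (neg_nonpos.mpr h.le), max_le_iff] at hneg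
    have : 0 ≤ t := by nlinarith
    have : t ≤ 1 := by nlinarith
    omega

theorem inGraverBasis_of_forall_eq_smul {m n : Type*} [Fintype m] [Fintype n]
    {A : Matrix m n ℤ} {u : n → ℤ} (hu : u ≠ 0) (hAu : A *ᵥ u = 0)
    (hspan : ∀ v, A *ᵥ v = 0 → (∀ i, u i = 0 → v i = 0) → ∃ t : ℤ, v = t • u) :
    InGraverBasis A u := by
  refine ⟨hu, hAu, fun v hv hAv hvu ⟨hpos, hneg⟩ => ?_⟩
  obtain ⟨t, rfl⟩ := hspan v hAv fun i hi => by
    have h₁ := hpos i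
    have h₂ := hneg i
    rw [hi] at h₁ h₂
    omega
  obtain ⟨i, hi⟩ := Function.ne_iff.mp hu
  rcases Int.eq_zero_or_one_of_conformal hi (hpos i) (hneg i) with rfl | rfl
  · exact hv (zero_smul ℤ u)
  · exact hvu (one_smul ℤ u)

theorem designMatrix_mulVec_apply {V : Type*} [Fintype V] [DecidableEq V]
    (faces : Finset (Finset V)) (d : V → ℕ) (v : (∀ x : V, Fin (d x)) → ℤ) (r : DRow faces d) :
    (designMatrix faces d *ᵥ v) r =
      ∑ c, if ∀ x : {x // x ∈ r.1.1}, (c x : ℕ) = r.2 x then v c else 0 := by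
  simp [mulVec, dotProduct, designMatrix]

theorem Fin.sum_fun_succ {n : ℕ} {α M : Type*} [Fintype α] [AddCommMonoid M]
    (f : (Fin (n + 1) → α) → M) : ∑ c, f c = ∑ a, ∑ c : Fin n → α, f (Fin.cons a c) := by
  rw [← (Fin.consEquiv fun _ => α).sum_comp, Fintype.sum_prod_type]
  rfl

theorem Fin.sum_fun_three {α M : Type*} [Fintype α] [AddCommMonoid M]
    (f : (Fin 3 → α) → M) : ∑ c, f c = ∑ a, ∑ b, ∑ c, f ![a, b, c] := by
  simp only [Fin.sum_fun_succ, Fintype.sum_unique]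
  rfl

theorem Fin.fun_three_ext {α β : Type*} {f g : (Fin 3 → α) → β}
    (h : ∀ a b c, f ![a, b, c] = g ![a, b, c]) : f = g := by
  funext c
  have hc : c = ![c 0, c 1, c 2] := by
    funext x
    fin_cases x <;> rfl
  rw [hc]
  exact h _ _ _

abbrev triangleBoundary : Finset (Finset (Fin 3)) := (univ : Finset (Fin 3)).powerset.erase univ

def boundaryRow (F : Finset (Fin 3)) (hF : F ∈ triangleBoundary) (j : Fin 3 → Fin 2) :
    DRow triangleBoundary fun _ => 3 :=
  ⟨⟨F, hF⟩, fun x => j x⟩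

theorem designMatrix_mulVec_boundaryRow (v : (Fin 3 → Fin 3) → ℤ) (F : Finset (Fin 3))
    (hF : F ∈ triangleBoundary) (j : Fin 3 → Fin 2) :
    (designMatrix triangleBoundary (fun _ => 3) *ᵥ v) (boundaryRow F hF j) =
      ∑ a : Fin 3, ∑ b : Fin 3, ∑ c : Fin 3,
        if ∀ x ∈ F, (![a, b, c] x : ℕ) = j x then v ![a, b, c] else 0 := by
  rw [designMatrix_mulVec_apply, Fin.sum_fun_three]
  simp [boundaryRow, Subtype.forall]

def triangleCircuit : (Fin 3 → Fin 3) → ℤ := fun c =>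
  ![![![-2, 1, 1], ![1, -1, 0], ![1, 0, -1]],
    ![![1, -1, 0], ![0, 0, 0], ![-1, 1, 0]],
    ![![1, 0, -1], ![-1, 1, 0], ![0, -1, 1]]] (c 0) (c 1) (c 2)

theorem designMatrix_mulVec_triangleCircuit :
    designMatrix triangleBoundary (fun _ => 3) *ᵥ triangleCircuit = 0 := by
  decide

/-- The rows of `A` on vectors supported in `supp triangleCircuit`: the total, the slices
`i = 0`, `j = 0`, `k = 0`, `k = 1`, and the lines whose two fixed coordinates lie in `{0, 1}`;
every other row vanishes identically there. -/
theorem triangleBoundary_rows_of_mulVec_eq_zero (v : (Fin 3 → Fin 3) → ℤ)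
    (hv : designMatrix triangleBoundary (fun _ => 3) *ᵥ v = 0)
    (hsupp : ∀ c, triangleCircuit c = 0 → v c = 0) :
    v ![0, 0, 0] + v ![0, 0, 1] + v ![0, 0, 2] + v ![0, 1, 0] + v ![0, 1, 1] + v ![0, 2, 0] +
        v ![0, 2, 2] + v ![1, 0, 0] + v ![1, 0, 1] + v ![1, 2, 0] + v ![1, 2, 1] + v ![2, 0, 0] +
        v ![2, 0, 2] + v ![2, 1, 0] + v ![2, 1, 1] + v ![2, 2, 1] + v ![2, 2, 2] = 0 ∧
      v ![0, 0, 0] + v ![0, 0, 1] + v ![0, 0, 2] + v ![0, 1, 0] + v ![0, 1, 1] + v ![0, 2, 0] +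
        v ![0, 2, 2] = 0 ∧
      v ![0, 0, 0] + v ![0, 0, 1] + v ![0, 0, 2] + v ![1, 0, 0] + v ![1, 0, 1] + v ![2, 0, 0] +
        v ![2, 0, 2] = 0 ∧
      v ![0, 0, 0] + v ![0, 1, 0] + v ![0, 2, 0] + v ![1, 0, 0] + v ![1, 2, 0] + v ![2, 0, 0] +
        v ![2, 1, 0] = 0 ∧
      v ![0, 0, 1] + v ![0, 1, 1] + v ![1, 0, 1] + v ![1, 2, 1] + v ![2, 1, 1] + v ![2, 2, 1] = 0 ∧
      v ![0, 0, 0] + v ![0, 0, 1] + v ![0, 0, 2] = 0 ∧ v ![0, 1, 0] + v ![0, 1, 1] = 0 ∧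
      v ![1, 0, 0] + v ![1, 0, 1] = 0 ∧
      v ![0, 0, 0] + v ![0, 1, 0] + v ![0, 2, 0] = 0 ∧ v ![0, 0, 1] + v ![0, 1, 1] = 0 ∧
      v ![1, 0, 0] + v ![1, 2, 0] = 0 ∧ v ![1, 0, 1] + v ![1, 2, 1] = 0 ∧
      v ![0, 0, 0] + v ![1, 0, 0] + v ![2, 0, 0] = 0 ∧ v ![0, 0, 1] + v ![1, 0, 1] = 0 ∧
      v ![0, 1, 0] + v ![2, 1, 0] = 0 ∧ v ![0, 1, 1] + v ![2, 1, 1] = 0 := by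
  have row F hF j := (designMatrix_mulVec_boundaryRow v F hF j).symm.trans (congrFun hv _)
  have hz : v ![0, 1, 2] = 0 ∧ v ![0, 2, 1] = 0 ∧ v ![1, 0, 2] = 0 ∧ v ![1, 1, 0] = 0 ∧
      v ![1, 1, 1] = 0 ∧ v ![1, 1, 2] = 0 ∧ v ![1, 2, 2] = 0 ∧ v ![2, 0, 1] = 0 ∧
      v ![2, 1, 2] = 0 ∧ v ![2, 2, 0] = 0 :=
    ⟨hsupp _ rfl, hsupp _ rfl, hsupp _ rfl, hsupp _ rfl, hsupp _ rfl, hsupp _ rfl, hsupp _ rfl,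
      hsupp _ rfl, hsupp _ rfl, hsupp _ rfl⟩
  have h := row ∅ (by decide) 0
  have h0 (a : Fin 2) := row {0} (by decide) ![a, 0, 0]
  have h1 (a : Fin 2) := row {1} (by decide) ![0, a, 0]
  have h2 (a : Fin 2) := row {2} (by decide) ![0, 0, a]
  have h01 (a b : Fin 2) := row {0, 1} (by decide) ![a, b, 0]
  have h02 (a b : Fin 2) := row {0, 2} (by decide) ![a, 0, b]
  have h12 (a b : Fin 2) := row {1, 2} (by decide) ![0, a, b]
  simp only [Fin.forall_fin_two] at h0 h1 h2 h01 h02 h12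
  simp only [notMem_empty, Pi.zero_apply, Fin.coe_ofNat_eq_mod, Nat.zero_mod, Fin.val_eq_zero_iff,
    IsEmpty.forall_iff, implies_true, ↓reduceIte, Fin.sum_univ_three, mem_singleton, forall_eq,
    Nat.mod_succ, zero_ne_one, OfNat.ofNat_ne_one, Matrix.cons_val, mem_insert, forall_eq_or_imp,
    and_true, and_false, Fin.reduceEq, hz, add_zero, zero_add]
    at h h0 h1 h2 h01 h02 h12
  obtain ⟨⟨hij00, hij01⟩, hij10⟩ := h01
  obtain ⟨⟨hik00, hik01⟩, hik10, hik11⟩ := h02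
  obtain ⟨⟨hjk00, hjk01⟩, hjk10, hjk11⟩ := h12
  refine ⟨by linarith, by linarith [h0.1], by linarith [h1.1], by linarith [h2.1],
    by linarith [h2.2], hij00, hij01, hij10, hik00, hik01, hik10, hik11, hjk00, hjk01, hjk10, hjk11⟩

theorem eq_smul_triangleCircuit_of_mulVec_eq_zero (v : (Fin 3 → Fin 3) → ℤ)
    (hv : designMatrix triangleBoundary (fun _ => 3) *ᵥ v = 0)
    (hsupp : ∀ c, triangleCircuit c = 0 → v c = 0) : v = v ![0, 0, 1] • triangleCircuit := by
  obtain ⟨h, hi0, hj0, hk0, hk1, hij00, hij01, hij10, hik00, hik01, hik10, hik11, hjk00, hjk01,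
    hjk10, hjk11⟩ := triangleBoundary_rows_of_mulVec_eq_zero v hv hsupp
  generalize ht : v ![0, 0, 1] = t at *
  -- Lines through exactly two support cells propagate `±t`; the slice `k = 0` together with the
  -- lines through `(0,0,0)` fixes that corner, and the other slices and the total fix the rest.
  have e011 : v ![0, 1, 1] = -t := by linarith
  have e010 : v ![0, 1, 0] = t := by linarith
  have e101 : v ![1, 0, 1] = -t := by linarith
  have e100 : v ![1, 0, 0] = t := by linarith
  have e120 : v ![1, 2, 0] = -t := by linarith
  have e121 : v ![1, 2, 1] = t := by linarith
  have e210 : v ![2, 1, 0] = -t := by linarith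
  have e211 : v ![2, 1, 1] = t := by linarith
  have e221 : v ![2, 2, 1] = -t := by linarith
  have e000 : v ![0, 0, 0] = -2 * t := by linarith
  have e002 : v ![0, 0, 2] = t := by linarith
  have e020 : v ![0, 2, 0] = t := by linarith
  have e200 : v ![2, 0, 0] = t := by linarith
  have e022 : v ![0, 2, 2] = -t := by linarith
  have e202 : v ![2, 0, 2] = -t := by linarith
  have e222 : v ![2, 2, 2] = t := by linarith
  refine Fin.fun_three_ext fun a b c => ?_
  fin_cases a <;> fin_cases b <;> fin_cases c <;> simp [triangleCircuit, mul_comm, *]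

/-- The design matrix of the hierarchical model with `C` the triangle graph complex (facets
`{1,2},{1,3},{2,3}`, i.e. all proper subsets of `{1,2,3}` are faces) and `d = (3,3,3)` is not
unimodular: its Graver basis contains a vector with an entry of absolute value at least `2`. -/
theorem stmt13 :
    ∃ u, InGraverBasis
        (designMatrix ((Finset.univ : Finset (Fin 3)).powerset.erase Finset.univ)
          (fun _ => 3)) u ∧
      ∃ c, 2 ≤ |u c| :=
  ⟨triangleCircuit,
    inGraverBasis_of_forall_eq_smul (Function.ne_iff.mpr ⟨![0, 0, 0], by decide⟩)
      designMatrix_mulVec_triangleCircuit fun v hv hsupp =>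
        ⟨_, eq_smul_triangleCircuit_of_mulVec_eq_zero v hv hsupp⟩,
    ![0, 0, 0], by decide⟩
end

section
/- The square matrix A_{Δ_m, d}, the design matrix of the hierarchical model on a full simplex Δ_m with any weight vector d, has determinant ±1; in particular its integer kernel is trivial and its Graver basis is empty. -/
open Finset

namespace Matrix

variable {ι R : Type*} [Fintype ι] [CommSemiring R]

def piKronecker {α β : ι → Type*} (M : ∀ i, Matrix (α i) (β i) R) :
    Matrix (∀ i, α i) (∀ i, β i) R :=
  fun a b => ∏ i, M i (a i) (b i)

theorem piKronecker_mul [DecidableEq ι] {α β γ : ι → Type*} [∀ i, Fintype (β i)]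
    (M : ∀ i, Matrix (α i) (β i) R) (N : ∀ i, Matrix (β i) (γ i) R) :
    piKronecker M * piKronecker N = piKronecker fun i => M i * N i := by
  ext a c
  simp only [mul_apply, piKronecker, ← prod_mul_distrib, Fintype.prod_sum]

theorem piKronecker_one {α : ι → Type*} [∀ i, DecidableEq (α i)] :
    piKronecker (fun i => (1 : Matrix (α i) (α i) R)) = 1 := by
  ext a b
  simp only [piKronecker, one_apply, Fintype.prod_boole, funext_iff]

end Matrix

def marginalMatrix (n : ℕ) : Matrix (Option (Fin (n - 1))) (Fin n) ℤ
  | none, _ => 1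
  | some j, x => if (x : ℕ) = j then 1 else 0

def marginalMatrixInv (n : ℕ) : Matrix (Fin n) (Option (Fin (n - 1))) ℤ
  | x, none => if (x : ℕ) = n - 1 then 1 else 0
  | x, some j => (if (x : ℕ) = j then 1 else 0) - if (x : ℕ) = n - 1 then 1 else 0

theorem Fin.sum_ite_val_eq {M : Type*} [AddCommMonoid M] {n a : ℕ} (h : a < n) (f : Fin n → M) :
    ∑ x : Fin n, (if (x : ℕ) = a then f x else 0) = f ⟨a, h⟩ := by
  rw [Fintype.sum_eq_single ⟨a, h⟩ fun x hx => if_neg fun hxa => hx (Fin.ext hxa), if_pos rfl]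

theorem marginalMatrix_mul_inv {n : ℕ} (hn : 0 < n) :
    marginalMatrix n * marginalMatrixInv n = 1 := by
  have hlast : n - 1 < n := by omega
  have hsum {a : ℕ} (ha : a < n) : ∑ x : Fin n, (if (x : ℕ) = a then 1 else 0 : ℤ) = 1 :=
    Fin.sum_ite_val_eq ha _
  ext (_ | j) (_ | k)
  · simp [Matrix.mul_apply, marginalMatrix, marginalMatrixInv, hsum hlast]
  · simp [Matrix.mul_apply, marginalMatrix, marginalMatrixInv, hsum hlast, sum_sub_distrib,
      hsum (k.2.trans hlast)]
  all_goals
    have hj : (j : ℕ) ≠ n - 1 := j.2.ne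
    simp only [Matrix.mul_apply, marginalMatrix, marginalMatrixInv, boole_mul,
      Fin.sum_ite_val_eq (j.2.trans hlast), hj, if_false, sub_zero]
    simp [Matrix.one_apply, Fin.ext_iff]

namespace DRow

variable {V : Type*} [Fintype V] [DecidableEq V] {d : V → ℕ}

def toPi (r : DRow (univ.powerset : Finset (Finset V)) d) (v : V) : Option (Fin (d v - 1)) :=
  if h : v ∈ r.1.1 then some (r.2 ⟨v, h⟩) else none

@[simp]
theorem isSome_toPi (r : DRow (univ.powerset : Finset (Finset V)) d) (v : V) :
    (toPi r v).isSome ↔ v ∈ r.1.1 := by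
  by_cases hv : v ∈ r.1.1 <;> simp [toPi, hv]

theorem toPi_injective :
    Function.Injective (toPi : DRow (univ.powerset : Finset (Finset V)) d → _) := by
  rintro ⟨⟨F, hF⟩, j⟩ ⟨⟨G, hG⟩, k⟩ h
  obtain rfl : F = G := by
    ext v
    have hv := isSome_toPi ⟨⟨F, hF⟩, j⟩ v
    rwa [h, isSome_toPi, Iff.comm] at hv
  congr
  funext ⟨v, hv⟩
  simpa [toPi, hv] using congrFun h v

theorem toPi_surjective :
    Function.Surjective (toPi : DRow (univ.powerset : Finset (Finset V)) d → _) := by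
  intro f
  refine ⟨⟨⟨univ.filter fun v => (f v).isSome, mem_powerset.2 (subset_univ _)⟩,
    fun v => (f v.1).get (mem_filter.1 v.2).2⟩, ?_⟩
  funext v
  cases hv : f v <;> simp [toPi, hv]

theorem card_eq_card_pi (hd : ∀ v, 0 < d v) :
    Fintype.card (DRow (univ.powerset : Finset (Finset V)) d) = Fintype.card (∀ v, Fin (d v)) := by
  rw [Fintype.card_of_bijective ⟨toPi_injective, toPi_surjective⟩]
  simp only [Fintype.card_pi, Fintype.card_option, Fintype.card_fin]
  exact prod_congr rfl fun v _ => Nat.sub_add_cancel (hd v)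

end DRow

section DesignMatrix

variable {V : Type*} [Fintype V] [DecidableEq V] {d : V → ℕ}

theorem marginalMatrix_toPi (r : DRow (univ.powerset : Finset (Finset V)) d) (v : V)
    (x : Fin (d v)) :
    marginalMatrix (d v) (r.toPi v) x = if ∀ h : v ∈ r.1.1, (x : ℕ) = r.2 ⟨v, h⟩ then 1 else 0 := by
  by_cases hv : v ∈ r.1.1 <;> simp [DRow.toPi, marginalMatrix, hv]

theorem designMatrix_powerset_eq_submatrix :
    designMatrix (univ.powerset : Finset (Finset V)) d =
      (Matrix.piKronecker fun v => marginalMatrix (d v)).submatrix DRow.toPi id := by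
  ext r i
  simp only [designMatrix, Matrix.submatrix_apply, Matrix.piKronecker, id, marginalMatrix_toPi,
    Fintype.prod_boole, Subtype.forall]

theorem designMatrix_powerset_mul_eq_one (hd : ∀ v, 0 < d v) :
    designMatrix (univ.powerset : Finset (Finset V)) d *
      (Matrix.piKronecker fun v => marginalMatrixInv (d v)).submatrix id DRow.toPi = 1 := by
  rw [designMatrix_powerset_eq_submatrix, ← Matrix.submatrix_mul _ _ _ _ _ Function.bijective_id,
    Matrix.piKronecker_mul]
  simp_rw [marginalMatrix_mul_inv (hd _)]
  rw [Matrix.piKronecker_one, Matrix.submatrix_one _ DRow.toPi_injective]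

end DesignMatrix

theorem Matrix.det_submatrix_eq_one_or_neg_one_of_mul_eq_one {m n : Type*} [Fintype m]
    [DecidableEq m] [Fintype n] [DecidableEq n] {A : Matrix m n ℤ} {B : Matrix n m ℤ}
    (h : A * B = 1) (e : n ≃ m) :
    (A.submatrix e id).det = 1 ∨ (A.submatrix e id).det = -1 := by
  refine Int.isUnit_iff.mp (isUnit_det_of_right_inverse (B := B.submatrix id e) ?_)
  rw [← submatrix_mul _ _ _ _ _ Function.bijective_id, h, submatrix_one_equiv]

/-- The design matrix of the hierarchical model on a full simplex `Δ_m` (whose faces are all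
subsets of `[m+1]`) with any weight vector `d` is square (rows and columns both number
`∏ d_v`), and identifying the row and column index sets by any bijection, its determinant is
`±1`; in particular its integer kernel is trivial and its Graver basis is empty. -/
theorem stmt15 (m : ℕ) (d : Fin (m + 1) → ℕ) (hd : ∀ v, 2 ≤ d v) :
    (∀ e : (∀ v : Fin (m + 1), Fin (d v)) ≃
        DRow ((Finset.univ : Finset (Fin (m + 1))).powerset) d,
      ((designMatrix Finset.univ.powerset d).submatrix e id).det = 1 ∨
      ((designMatrix Finset.univ.powerset d).submatrix e id).det = -1) ∧
    (∀ u, (designMatrix ((Finset.univ : Finset (Fin (m + 1))).powerset) d).mulVec u = 0 →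
      u = 0) ∧
    (∀ u, ¬ InGraverBasis
      (designMatrix ((Finset.univ : Finset (Fin (m + 1))).powerset) d) u) := by
  have hd_pos (v : Fin (m + 1)) : 0 < d v := two_pos.trans_le (hd v)
  have hAB := designMatrix_powerset_mul_eq_one hd_pos
  obtain ⟨e⟩ := Fintype.card_eq.mp (DRow.card_eq_card_pi hd_pos)
  have hBA := (Matrix.mul_eq_one_comm_of_equiv e).mp hAB
  have hker (u : (∀ v, Fin (d v)) → ℤ)
      (hu : (designMatrix (univ.powerset : Finset (Finset (Fin (m + 1)))) d).mulVec u = 0) :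
      u = 0 := by
    rw [← Matrix.one_mulVec u, ← hBA, ← Matrix.mulVec_mulVec, hu, Matrix.mulVec_zero]
  exact ⟨Matrix.det_submatrix_eq_one_or_neg_one_of_mul_eq_one hAB, hker,
    fun u hu => hu.1 (hker u hu.2.1)⟩
end

section
/- Let A ∈ Z^(d×n) with full row rank be unimodular. Then every Graver basis element of A is a circuit of A, i.e., it has minimal support among nonzero elements of ker_Z(A) and relatively prime entries. -/
open Function Matrix

section Elementary

variable {ι R : Type*}

def SignCompatible [Zero R] [Mul R] [LT R] (x y : ι → R) : Prop :=
  ∀ i, x i ≠ 0 → 0 < x i * y i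

theorem SignCompatible.support_subset [MulZeroClass R] [Preorder R] {x y : ι → R}
    (h : SignCompatible x y) : support x ⊆ support y :=
  fun i hi hy => by simpa [hy] using h i hi

/-- Rockafellar's elementary vectors; for the rational kernel of an integer matrix they are the
rational multiples of its circuits. -/
def IsElementary [Semiring R] (S : Submodule R (ι → R)) (c : ι → R) : Prop :=
  c ∈ S ∧ c ≠ 0 ∧ ∀ w ∈ S, w ≠ 0 → support w ⊆ support c → support w = support c

theorem IsElementary.smul [Field R] {S : Submodule R (ι → R)} {c : ι → R}
    (hc : IsElementary S c) {a : R} (ha : a ≠ 0) : IsElementary S (a • c) := by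
  obtain ⟨hcS, hc0, hmin⟩ := hc
  rw [IsElementary, support_const_smul_of_ne_zero a c ha]
  exact ⟨S.smul_mem a hcS, smul_ne_zero ha hc0, hmin⟩

variable [Field R] [LinearOrder R] [IsStrictOrderedRing R]

theorem SignCompatible.smul_left {x y : ι → R} {a : R} (ha : 0 < a) (h : SignCompatible x y) :
    SignCompatible (a • x) y := fun i hi => by
  rw [Pi.smul_apply, smul_eq_mul, mul_assoc]
  exact mul_pos ha (h i (right_ne_zero_of_mul hi))

theorem SignCompatible.trans {x y z : ι → R} (hxy : SignCompatible x y)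
    (hyz : SignCompatible y z) : SignCompatible x z := by
  intro i hx
  have hxy := hxy i hx
  have hy : y i ≠ 0 := by rintro h; simp [h] at hxy
  exact pos_of_mul_pos_left (by nlinarith [mul_pos hxy (hyz i hy)]) (mul_self_nonneg (y i))

/-- Take `t = c j / w j` with `|c j / w j|` minimal. -/
theorem exists_sub_smul_signCompatible [Finite ι] {c w : ι → R} (hw : w ≠ 0)
    (hwc : support w ⊆ support c) :
    ∃ (t : R) (j : ι), c j ≠ 0 ∧ (c - t • w) j = 0 ∧ SignCompatible (c - t • w) c := by
  classical
  have := Fintype.ofFinite ι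
  obtain ⟨j, hj, hmin⟩ := Finset.exists_min_image {i | w i ≠ 0} (fun i => |c i / w i|)
    (by simpa [Finset.Nonempty, funext_iff] using hw)
  have hwj : w j ≠ 0 := by simpa using hj
  refine ⟨c j / w j, j, hwc hwj, by simp [div_mul_cancel₀ _ hwj], fun i hi => ?_⟩
  have hci : c i ≠ 0 := fun hci => hi <| by
    have hwi : w i = 0 := notMem_support.1 fun h => hwc h hci
    simp [hci, hwi]
  refine lt_of_le_of_ne ?_ (mul_ne_zero hi hci).symm
  by_cases hwi : w i = 0
  · simp [hwi, mul_self_nonneg]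
  have hle : |c j / w j| * |w i| ≤ |c i| := by
    have := mul_le_mul_of_nonneg_right (hmin i (by simpa using hwi)) (abs_nonneg (w i))
    rwa [abs_div (c i), div_mul_cancel₀ _ (abs_ne_zero.mpr hwi)] at this
  have : c j / w j * w i * c i ≤ c i * c i := by
    calc c j / w j * w i * c i ≤ |c j / w j * w i * c i| := le_abs_self _
      _ = |c j / w j| * |w i| * |c i| := by rw [abs_mul, abs_mul]
      _ ≤ |c i| * |c i| := mul_le_mul_of_nonneg_right hle (abs_nonneg _)
      _ = c i * c i := abs_mul_abs_self _
  simp only [Pi.sub_apply, Pi.smul_apply, smul_eq_mul]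
  nlinarith

/-- Take `c` of minimal support among the nonzero vectors of `S` sign-compatible with `u`. -/
theorem exists_isElementary_signCompatible [Finite ι] {S : Submodule R (ι → R)} {u : ι → R}
    (hu : u ∈ S) (hu0 : u ≠ 0) : ∃ c, IsElementary S c ∧ SignCompatible c u := by
  obtain ⟨c, ⟨hcS, hc0, hcu⟩, hmin⟩ := (measure fun c : ι → R => (support c).ncard).wf.has_min
    {c | c ∈ S ∧ c ≠ 0 ∧ SignCompatible c u} ⟨u, hu, hu0, fun i hi => mul_self_pos.2 hi⟩
  refine ⟨c, ⟨hcS, hc0, fun w hwS hw0 hwc => hwc.antisymm ?_⟩, hcu⟩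
  obtain ⟨t, j, hcj, hxj, hxc⟩ := exists_sub_smul_signCompatible hw0 hwc
  have hx : c - t • w = 0 := by
    by_contra hx
    refine hmin _ ⟨S.sub_mem hcS (S.smul_mem t hwS), hx, hxc.trans hcu⟩ ?_
    refine Set.ncard_lt_ncard ?_ (Set.toFinite _)
    exact (Set.ssubset_iff_of_subset hxc.support_subset).2 ⟨j, hcj, by simpa using hxj⟩
  rw [sub_eq_zero.1 hx]
  exact support_const_smul_subset t w

theorem exists_intCast_eq_inv_abs_smul {c : ι → R} {i₀ : ι} (h : ∀ i, c i ≠ 0 → |c i| = |c i₀|) :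
    ∃ z : ι → ℤ, (∀ i, |z i| ≤ 1) ∧ (fun i => (z i : R)) = |c i₀|⁻¹ • c := by
  refine ⟨fun i => SignType.sign (c i), fun i => ?_, ?_⟩
  · rcases lt_trichotomy (c i) 0 with hi | hi | hi <;> simp [hi]
  ext i
  by_cases hi : c i = 0
  · simp [hi]
  rw [SignType.intCast_cast, Pi.smul_apply, smul_eq_mul, ← h i hi,
    eq_inv_mul_iff_mul_eq₀ (abs_ne_zero.2 hi), mul_comm, sign_mul_abs]

end Elementary

theorem Function.Injective.update_of_notMem_range {α β : Type*} [DecidableEq α] {g : α → β}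
    (hg : Injective g) {i : β} (hi : i ∉ Set.range g) (p : α) : Injective (update g p i) := by
  intro a b hab
  by_cases ha : a = p <;> by_cases hb : b = p <;>
    simp only [update_apply, ha, hb, if_true, if_false] at hab
  · exact ha.trans hb.symm
  · exact absurd ⟨b, hab.symm⟩ hi
  · exact absurd ⟨a, hab⟩ hi
  · exact hg hab

section Minors

variable {K ι m : Type*} [Field K] [Fintype ι] {B : Matrix m ι K}

theorem LinearIndependent.span_range_col_eq_top [Fintype m] (hB : LinearIndependent K B.row) :
    Submodule.span K (Set.range B.col) = ⊤ := by
  apply Submodule.eq_top_of_finrank_eq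
  rw [← rank_eq_finrank_span_cols, hB.rank_matrix, Module.finrank_fintype_fun_eq_card]

theorem linearIndepOn_col_iff {s : Set ι} :
    LinearIndepOn K B.col s ↔ ∀ w, B *ᵥ w = 0 → support w ⊆ s → w = 0 := by
  have hlc (w : ι →₀ K) : Finsupp.linearCombination K B.col w = B *ᵥ w := by
    ext r
    simp [Finsupp.linearCombination_apply, Finsupp.sum_fintype, mulVec, dotProduct, mul_comm]
  rw [linearIndepOn_iff]
  refine ⟨fun h w hw hws => ?_, fun h l hl hl0 => ?_⟩
  · have := h (Finsupp.equivFunOnFinite.symm w) ((Finsupp.mem_supported' _ _).2 fun i hi => ?_)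
      (by rw [hlc]; simpa using hw)
    · simpa using congrArg (⇑) this
    · simpa using notMem_support.mp (mt (@hws i) hi)
  · refine DFunLike.coe_injective (h l (by rwa [← hlc]) ?_)
    simpa [Finsupp.fun_support_eq] using (Finsupp.mem_supported _ _).1 hl

variable [Fintype m] [DecidableEq m]

theorem exists_det_submatrix_ne_zero (hB : Submodule.span K (Set.range B.col) = ⊤) {s : Set ι}
    (hs : LinearIndepOn K B.col s) :
    ∃ g : m → ι, Injective g ∧ s ⊆ Set.range g ∧ LinearIndepOn K B.col (Set.range g) ∧
      (B.submatrix id g).det ≠ 0 := by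
  classical
  obtain ⟨b, -, hsb, hspan, hb⟩ := exists_linearIndepOn_extension hs (Set.subset_univ s)
  have hcard : Fintype.card m = Fintype.card b := by
    have hbspan : Submodule.span K (Set.range fun x : b => B.col x) = ⊤ := by
      rw [← Set.image_eq_range, eq_top_iff, ← hB, Submodule.span_le, ← Set.image_univ]
      exact hspan
    have := finrank_span_eq_card hb
    rwa [hbspan, finrank_top, Module.finrank_fintype_fun_eq_card] at this
  let e : m ≃ b := Fintype.equivOfCardEq hcard
  have hrange : Set.range (Subtype.val ∘ e) = b := by
    rw [Set.range_comp, e.range_eq_univ, Set.image_univ, Subtype.range_coe]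
  refine ⟨Subtype.val ∘ e, Subtype.val_injective.comp e.injective, by rwa [hrange],
    by rwa [hrange], ?_⟩
  have hcols : LinearIndependent K (B.submatrix id (Subtype.val ∘ e)).col := hb.comp e e.injective
  exact ((isUnit_iff_isUnit_det _).1 (linearIndependent_cols_iff_isUnit.1 hcols)).ne_zero

/-- Apply `x ↦` the minor of `g` with column `p` replaced by `x` to `∑ k, c k • B.col k = 0`:
only the terms `k = i` and `k = g p` survive. -/
theorem mul_det_submatrix_update [DecidableEq ι] {c : ι → K} (hc : B *ᵥ c = 0) {g : m → ι} {i : ι}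
    (hi : i ∉ Set.range g) (hsupp : support c ⊆ insert i (Set.range g)) (p : m) :
    c i * (B.submatrix id (update g p i)).det = -(c (g p) * (B.submatrix id g).det) := by
  set M := B.submatrix id g
  have hupdate : B.submatrix id (update g p i) = M.updateCol p (B.col i) := by
    ext r q
    by_cases hq : q = p <;> simp [M, hq]
  have hsum : ∑ k, c k * M.cramer (B.col k) p = 0 := by
    have := congrArg (fun x => M.cramer x p) hc
    simp only [mulVec_eq_sum, op_smul_eq_smul, map_sum, map_smul, map_zero, Finset.sum_apply,
      Pi.smul_apply, smul_eq_mul, Pi.zero_apply] at this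
    exact this
  rw [Fintype.sum_eq_add i (g p) (fun h => hi ⟨p, h.symm⟩) ?_] at hsum
  · rw [cramer_row_self M (B.col (g p)) p fun _ => rfl, cramer_apply, ← hupdate] at hsum
    simpa [eq_neg_iff_add_eq_zero] using hsum
  rintro k ⟨hki, hkp⟩
  by_cases hck : c k = 0
  · simp [hck]
  obtain ⟨q, rfl⟩ := (Set.mem_insert_iff.1 (hsupp hck)).resolve_left hki
  rw [cramer_row_self M (B.col (g q)) q fun _ => rfl, Pi.single_apply,
    if_neg fun h : p = q => hkp (h ▸ rfl), mul_zero]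

theorem IsElementary.eq_or_eq_neg_of_minors [DecidableEq ι]
    (hB : Submodule.span K (Set.range B.col) = ⊤)
    (hminors : ∃ l : K, ∀ g : m → ι, Injective g → (B.submatrix id g).det = 0 ∨
      (B.submatrix id g).det = l ∨ (B.submatrix id g).det = -l)
    {c : ι → K} (hc : IsElementary (LinearMap.ker B.mulVecLin) c) {i j : ι} (hi : c i ≠ 0)
    (hj : c j ≠ 0) : c j = c i ∨ c j = -c i := by
  obtain ⟨hcB, hc0, hmin⟩ := hc
  rw [LinearMap.mem_ker, mulVecLin_apply] at hcB
  obtain rfl | hji := eq_or_ne j i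
  · exact Or.inl rfl
  have hs : LinearIndepOn K B.col (support c \ {i}) := by
    refine linearIndepOn_col_iff.2 fun w hw hws => by_contra fun hw0 => ?_
    have := hmin w (by simpa using hw) hw0 (hws.trans Set.sdiff_subset)
    exact (hws (this ▸ hi : i ∈ support w)).2 rfl
  obtain ⟨g, hg, hsg, hgind, hdet⟩ := exists_det_submatrix_ne_zero hB hs
  have hsupp : support c ⊆ insert i (Set.range g) := fun k hk =>
    (eq_or_ne k i).imp id fun hki => hsg ⟨hk, hki⟩
  have hig : i ∉ Set.range g := fun hig => hc0 <| linearIndepOn_col_iff.1 hgind c hcB <|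
    hsupp.trans (Set.insert_subset hig subset_rfl)
  obtain ⟨p, rfl⟩ := hsg ⟨hj, hji⟩
  have hexch := mul_det_submatrix_update hcB hig hsupp p
  obtain ⟨l, hl⟩ := hminors
  have hdet' : (B.submatrix id (update g p i)).det ≠ 0 := by
    intro h
    simp [h, hj, hdet] at hexch
  have hpm : (B.submatrix id (update g p i)).det = (B.submatrix id g).det ∨
      (B.submatrix id (update g p i)).det = -(B.submatrix id g).det := by
    have := hl _ (hg.update_of_notMem_range hig p)
    grind
  rcases hpm with h | h <;> rw [h] at hexch
  · exact Or.inr (mul_right_cancel₀ hdet (by linear_combination hexch))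
  · exact Or.inl (mul_right_cancel₀ hdet (by linear_combination hexch))

end Minors

section IntegerMatrix

variable {ι m n : Type*}

theorem support_intCast_comp (v : ι → ℤ) : support (fun i => (v i : ℚ)) = support v :=
  support_comp_eq _ Int.cast_eq_zero v

theorem intCast_comp_eq_zero_iff {v : ι → ℤ} : (fun i => (v i : ℚ)) = 0 ↔ v = 0 := by
  simp [funext_iff]

theorem signCompatible_intCast_iff {x y : ι → ℤ} :
    SignCompatible (fun i => (x i : ℚ)) (fun i => (y i : ℚ)) ↔ SignCompatible x y := by
  simp only [SignCompatible]
  norm_cast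

theorem intCast_mem_ker_iff [Fintype n] (A : Matrix m n ℤ) (v : n → ℤ) :
    (fun i => (v i : ℚ)) ∈ LinearMap.ker (A.map (Int.cast : ℤ → ℚ)).mulVecLin ↔ A *ᵥ v = 0 := by
  have h (r : m) : (A.map (Int.cast : ℤ → ℚ) *ᵥ fun i => (v i : ℚ)) r = ((A *ᵥ v) r : ℚ) :=
    ((Int.castRingHom ℚ).map_mulVec A v r).symm
  simp only [LinearMap.mem_ker, mulVecLin_apply, funext_iff, Pi.zero_apply, h, Int.cast_eq_zero]

theorem LinearIndependent.row_map_intCast [Fintype n] {A : Matrix m n ℤ}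
    (hA : LinearIndependent ℤ A.row) : LinearIndependent ℚ (A.map (Int.cast : ℤ → ℚ)).row := by
  have hinj : LinearMap.ker ((Int.castAddHom ℚ).toIntLinearMap.compLeft n) = ⊥ :=
    LinearMap.ker_eq_bot.2 (Int.cast_injective.comp_left)
  exact (LinearIndependent.iff_fractionRing ℤ ℚ).1 (hA.map' _ hinj)

theorem det_submatrix_map_intCast [Fintype m] [DecidableEq m] (A : Matrix m n ℤ) (g : m → n) :
    ((A.map (Int.cast : ℤ → ℚ)).submatrix id g).det = ((A.submatrix id g).det : ℚ) := by
  rw [submatrix_map]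
  exact ((Int.castRingHom ℚ).map_det _).symm

variable [Fintype m] [Fintype n] {A : Matrix m n ℤ}

theorem IsUnimodularFR.abs_eq_of_isElementary [DecidableEq m] [DecidableEq n]
    (hA : IsUnimodularFR A) {c : n → ℚ}
    (hc : IsElementary (LinearMap.ker (A.map (Int.cast : ℤ → ℚ)).mulVecLin) c) {i j : n}
    (hi : c i ≠ 0) (hj : c j ≠ 0) : |c i| = |c j| := by
  obtain ⟨l, -, hl⟩ := hA.2
  refine abs_eq_abs.2 (hc.eq_or_eq_neg_of_minors hA.1.row_map_intCast.span_range_col_eq_top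
    ⟨l, fun g hg => ?_⟩ hj hi)
  rw [det_submatrix_map_intCast]
  exact_mod_cast hl g hg

theorem InGraverBasis.eq_of_signCompatible {u z : n → ℤ} (hu : InGraverBasis A u) (hz : z ≠ 0)
    (hAz : A *ᵥ z = 0) (hzu : SignCompatible z u) (hz1 : ∀ i, |z i| ≤ 1) : z = u := by
  by_contra hne
  refine hu.2.2 z hz hAz hne ⟨fun i => ?_, fun i => ?_⟩ <;>
  · have hzi := hzu i
    obtain h | h | h : z i = 0 ∨ z i = 1 ∨ z i = -1 := by have := abs_le.1 (hz1 i); omega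
    all_goals simp only [h] at hzi ⊢; omega

theorem InGraverBasis.isElementary_of_isUnimodularFR [DecidableEq m] [DecidableEq n] {u : n → ℤ}
    (hA : IsUnimodularFR A) (hu : InGraverBasis A u) :
    IsElementary (LinearMap.ker (A.map (Int.cast : ℤ → ℚ)).mulVecLin) (fun i => (u i : ℚ)) ∧
      ∀ i, |u i| ≤ 1 := by
  obtain ⟨c, hc, hcu⟩ := exists_isElementary_signCompatible ((intCast_mem_ker_iff A u).2 hu.2.1)
    (intCast_comp_eq_zero_iff.not.2 hu.1)
  obtain ⟨i₀, hi₀⟩ : ∃ i, c i ≠ 0 := Function.ne_iff.1 hc.2.1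
  obtain ⟨z, hz1, hzc⟩ := exists_intCast_eq_inv_abs_smul (c := c) fun i hi =>
    hA.abs_eq_of_isElementary hc hi hi₀
  have ha : 0 < |c i₀|⁻¹ := inv_pos.2 (abs_pos.2 hi₀)
  have hz : IsElementary _ (fun i => (z i : ℚ)) := hzc ▸ hc.smul ha.ne'
  obtain rfl : z = u := by
    refine hu.eq_of_signCompatible (intCast_comp_eq_zero_iff.not.1 hz.2.1)
      ((intCast_mem_ker_iff A z).1 hz.1) ?_ hz1
    rw [← signCompatible_intCast_iff, hzc]
    exact hcu.smul_left ha
  exact ⟨hz, hz1⟩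

end IntegerMatrix

/-- For a unimodular full-row-rank matrix, every Graver basis element is a circuit: it has
inclusion-minimal support among nonzero kernel vectors and relatively prime entries. -/
theorem stmt16 {d n : ℕ} (A : Matrix (Fin d) (Fin n) ℤ) (hA : IsUnimodularFR A)
    (u : Fin n → ℤ) (hu : InGraverBasis A u) :
    (∀ v : Fin n → ℤ, v ≠ 0 → A.mulVec v = 0 →
      {i | v i ≠ 0} ⊆ {i | u i ≠ 0} → {i | v i ≠ 0} = {i | u i ≠ 0}) ∧
    Finset.univ.gcd u = 1 := by
  obtain ⟨⟨-, -, hmin⟩, hu1⟩ := hu.isElementary_of_isUnimodularFR hA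
  refine ⟨fun v hv0 hAv hvu => ?_, ?_⟩
  · have := hmin _ ((intCast_mem_ker_iff A v).2 hAv) (intCast_comp_eq_zero_iff.not.2 hv0)
      (by rwa [support_intCast_comp, support_intCast_comp])
    rwa [support_intCast_comp, support_intCast_comp] at this
  · obtain ⟨i, hi⟩ : ∃ i, u i ≠ 0 := Function.ne_iff.1 hu.1
    rw [← Finset.normalize_gcd, normalize_eq_one]
    exact isUnit_of_dvd_unit (Finset.gcd_dvd (Finset.mem_univ i))
      (Int.isUnit_iff_abs_eq.2 (le_antisymm (hu1 i) (Int.one_le_abs hi)))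
end

section
/- Let C be a simplicial complex on ground set V with a face E such that every facet F of C satisfies: F ∩ E ≠ ∅ implies E ⊆ F. Let C' be the complex on V' = (V ∪ {v₀}) \ E whose facets are the facets of C disjoint from E together with (F \ E) ∪ {v₀} for facets F containing E. Given d ∈ Z_{≥2}^V, define d' on V' by d'_v = d_v for v ∈ V ∩ V' and d'_{v₀} = ∏_{v∈E} d_v. Then ker_Z(A_{C,d}) = ker_Z(A_{C',d'}) after the natural identification of column index sets [∏_{v∈V} d_v] via the bijection [∏_{v∈E} d_v] ≅ [d'_{v₀}]. -/
/-- The ground set `V' = (V ∪ {v₀}) \ E` of the contracted complex: the vertices of `V`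
outside `E`, plus one new vertex `v₀` (the `Unit` summand). -/
abbrev GroundSet' {V : Type*} [DecidableEq V] (E : Finset V) : Type _ :=
  {x : V // x ∉ E} ⊕ Unit

/-- The new weight function: `d'_v = d_v` for old vertices, and `d'_{v₀} = ∏_{v ∈ E} d_v`. -/
def weight' {V : Type*} [DecidableEq V] (E : Finset V) (d : V → ℕ) : GroundSet' E → ℕ :=
  fun x => match x with
    | Sum.inl v => d v.1
    | Sum.inr _ => E.prod d

/-- The identification of column index sets: a tuple of states `c` on `V` yields the tuple on
`V'` keeping its values outside `E` and grouping its values on `E` into a single state of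
`v₀` via a bijection `ψ : ∏_{v ∈ E} [d_v] ≅ [∏_{v ∈ E} d_v]`. -/
def liftCol {V : Type*} [DecidableEq V] (E : Finset V) (d : V → ℕ)
    (ψ : (∀ v : {x : V // x ∈ E}, Fin (d v.1)) ≃ Fin (E.prod d))
    (c : ∀ v : V, Fin (d v)) : ∀ x : GroundSet' E, Fin (weight' E d x) :=
  fun x => match x with
    | Sum.inl v => c v.1
    | Sum.inr _ => ψ fun v => c v.1

/-- The image in `V'` of a set `F ⊆ V` of old vertices (its part outside `E`). -/
def liftFace {V : Type*} [Fintype V] [DecidableEq V] (E : Finset V) (F : Finset V) :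
    Finset (GroundSet' E) :=
  Finset.univ.filter fun x => ∃ v : {x : V // x ∉ E}, x = Sum.inl v ∧ v.1 ∈ F

/-!
A vector lies in the integer kernel of a design matrix iff all its marginals over faces vanish:
the rows only record the levels `j_v < d_v - 1`, but the marginal over `F` at the top level of
`v ∈ F` is the marginal over the face `F \ {v}` minus the marginals at the other levels of `v`,
so induction on the number of top-level coordinates recovers every marginal. Marginals over a
face are determined by those over any larger face, so facets suffice. Under the identification
of columns, fixing the coordinates of a facet disjoint from `E` is the same as fixing those of
its image in `C'`, and fixing the coordinates of a facet containing `E` is the same as fixing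
its coordinates outside `E` together with the grouped coordinate `v₀`.
-/

open Finset

section FiberSums
variable {ι κ κ' M : Type*} [Fintype ι] [DecidableEq κ] [DecidableEq κ'] [AddCommMonoid M]

/-- For `π = F.restrict` on columns, this says that all marginals over the face `F` vanish. -/
def FiberSumsVanish (π : ι → κ) (x : ι → M) : Prop :=
  ∀ c₀, ∑ c with π c = π c₀, x c = 0

theorem FiberSumsVanish.of_factors {π : ι → κ} {π' : ι → κ'} {x : ι → M}
    (h : FiberSumsVanish π x) (hπ : ∀ c c', π c = π c' → π' c = π' c') :
    FiberSumsVanish π' x := by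
  intro c₀
  set fiber := ({c | π' c = π' c₀} : Finset ι)
  rw [← sum_fiberwise_of_maps_to (g := π) (t := fiber.image π) fun c hc => mem_image_of_mem π hc]
  refine sum_eq_zero fun k hk => ?_
  obtain ⟨c₁, hc₁, rfl⟩ := mem_image.1 hk
  rw [filter_filter, ← h c₁]
  refine sum_congr (filter_congr fun c _ => ?_) fun _ _ => rfl
  exact and_iff_right_of_imp fun hc => (hπ c c₁ hc).trans (mem_filter.1 hc₁).2

theorem fiberSumsVanish_iff_comp {ι' : Type*} [Fintype ι'] {π : ι → κ} {π' : ι' → κ'}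
    {x : ι → M} {e : ι' → ι} (he : e.Bijective)
    (hπ : ∀ c c', π (e c) = π (e c') ↔ π' c = π' c') :
    FiberSumsVanish π x ↔ FiberSumsVanish π' (x ∘ e) := by
  have key : ∀ c₀, ∑ c with π' c = π' c₀, x (e c) = ∑ c with π c = π (e c₀), x c := by
    intro c₀
    simp only [sum_filter, ← hπ]
    exact he.sum_comp fun c => if π c = π (e c₀) then x c else 0
  refine ⟨fun h c₀ => (key c₀).trans (h _), fun h c₀ => ?_⟩
  obtain ⟨c₁, rfl⟩ := he.2 c₀
  exact (key c₁).symm.trans (h c₁)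

end FiberSums

theorem Finset.restrict_eq_restrict_iff {ι : Type*} {π : ι → Type*} {s : Finset ι}
    {f g : ∀ i, π i} : s.restrict f = s.restrict g ↔ ∀ i ∈ s, f i = g i := by
  simp [funext_iff]

theorem FiberSumsVanish.restrict_mono {ι : Type*} [DecidableEq ι] [Fintype ι] {d : ι → ℕ}
    {M : Type*} [AddCommMonoid M] {x : (∀ i, Fin (d i)) → M} {s t : Finset ι}
    (h : FiberSumsVanish t.restrict x) (hst : s ⊆ t) : FiberSumsVanish s.restrict x :=
  h.of_factors fun c c' hc => by
    simp only [restrict_eq_restrict_iff] at hc ⊢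
    exact fun i hi => hc i (hst hi)

section DesignMatrix
variable {V : Type*} [Fintype V] [DecidableEq V] {faces : Finset (Finset V)} {d : V → ℕ}
  {x : (∀ v, Fin (d v)) → ℤ}

theorem designMatrix_mulVec_apply_s18 (r : DRow faces d) :
    (designMatrix faces d).mulVec x r = ∑ c with ∀ v : r.1.1, (c v : ℕ) = r.2 v, x c := by
  simp [Matrix.mulVec, dotProduct, designMatrix, sum_filter]

theorem sum_restrict_erase_eq_sum_update {F : Finset V} {v : V} (hv : v ∈ F)
    (c₀ : ∀ v, Fin (d v)) :
    ∑ c with (F.erase v).restrict c = (F.erase v).restrict c₀, x c =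
      ∑ k, ∑ c with F.restrict c = F.restrict (Function.update c₀ v k), x c := by
  rw [← sum_fiberwise _ (fun c => c v)]
  refine sum_congr rfl fun k _ => sum_congr ?_ fun _ _ => rfl
  ext c
  simp only [mem_filter, mem_univ, true_and, restrict_eq_restrict_iff, mem_erase]
  constructor
  · rintro ⟨h, rfl⟩ w hw
    rcases eq_or_ne w v with rfl | hne
    · simp
    · simpa [hne] using h w ⟨hne, hw⟩
  · intro h
    exact ⟨fun w ⟨hne, hw⟩ => by simpa [hne] using h w hw, by simpa using h v hv⟩

theorem designMatrix_mulVec_apply_eq_sum_restrict {r : DRow faces d} {c₀ : ∀ v, Fin (d v)}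
    (hc₀ : ∀ v : r.1.1, (c₀ v : ℕ) = r.2 v) :
    (designMatrix faces d).mulVec x r = ∑ c with r.1.1.restrict c = r.1.1.restrict c₀, x c := by
  rw [designMatrix_mulVec_apply_s18]
  refine sum_congr (filter_congr fun c _ => ?_) fun _ _ => rfl
  simp only [restrict_eq_restrict_iff, Fin.ext_iff, Subtype.forall]
  exact forall₂_congr fun v hv => by rw [hc₀ ⟨v, hv⟩]

theorem sum_restrict_eq_zero_of_mulVec_eq_zero (hdown : ∀ F ∈ faces, ∀ G ⊆ F, G ∈ faces)
    (hx : (designMatrix faces d).mulVec x = 0) {F : Finset V} (hF : F ∈ faces)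
    (c₀ : ∀ v, Fin (d v)) :
    ∑ c with F.restrict c = F.restrict c₀, x c = 0 := by
  by_cases htop : ∃ v ∈ F, (c₀ v : ℕ) = d v - 1
  · obtain ⟨v, hv, hvtop⟩ := htop
    have hsplit := sum_restrict_erase_eq_sum_update (x := x) hv c₀
    rw [← add_sum_erase _ _ (mem_univ (c₀ v)), Function.update_eq_self] at hsplit
    have hother : ∑ k ∈ univ.erase (c₀ v),
        ∑ c with F.restrict c = F.restrict (Function.update c₀ v k), x c = 0 :=
      sum_eq_zero fun k hk =>
        sum_restrict_eq_zero_of_mulVec_eq_zero hdown hx hF (Function.update c₀ v k)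
    rw [hother, add_zero,
      sum_restrict_eq_zero_of_mulVec_eq_zero hdown hx (hdown F hF _ (erase_subset v F))] at hsplit
    exact hsplit.symm
  · push Not at htop
    have hrow := congrFun hx
      ⟨⟨F, hF⟩, fun v => ⟨c₀ v, Nat.lt_of_le_of_ne (Nat.le_sub_one_of_lt (c₀ v).2) (htop v v.2)⟩⟩
    rwa [designMatrix_mulVec_apply_eq_sum_restrict fun v => rfl] at hrow
termination_by #(F.filter fun v => (c₀ v : ℕ) = d v - 1)
decreasing_by
  · refine (card_le_card fun w hw => ?_).trans_lt (card_erase_lt_of_mem (mem_filter.2 ⟨hv, hvtop⟩))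
    obtain ⟨hwF, hw⟩ := mem_filter.1 hw
    rcases eq_or_ne w v with rfl | hwv
    · rw [Function.update_self] at hw
      exact absurd (Fin.ext (hw.trans hvtop.symm)) (ne_of_mem_erase hk)
    · rw [Function.update_of_ne hwv] at hw
      exact mem_erase.2 ⟨hwv, mem_filter.2 ⟨hwF, hw⟩⟩
  · rw [filter_erase]
    exact card_erase_lt_of_mem (mem_filter.2 ⟨hv, hvtop⟩)

theorem designMatrix_mulVec_eq_zero_iff (hdown : ∀ F ∈ faces, ∀ G ⊆ F, G ∈ faces) :
    (designMatrix faces d).mulVec x = 0 ↔ ∀ F ∈ faces, FiberSumsVanish F.restrict x := by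
  refine ⟨fun hx F hF => sum_restrict_eq_zero_of_mulVec_eq_zero hdown hx hF, fun h => ?_⟩
  funext r
  by_cases hr : ∃ c₀ : ∀ v, Fin (d v), ∀ v : r.1.1, (c₀ v : ℕ) = r.2 v
  · obtain ⟨c₀, hc₀⟩ := hr
    rw [designMatrix_mulVec_apply_eq_sum_restrict hc₀]
    exact h r.1.1 r.1.2 c₀
  · rw [designMatrix_mulVec_apply_s18, filter_false_of_mem fun c _ => not_exists.1 hr c, sum_empty]
    rfl

end DesignMatrix

section Contraction
variable {V : Type*} [DecidableEq V] {E : Finset V} {d : V → ℕ}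
  {ψ : (∀ v : {x : V // x ∈ E}, Fin (d v.1)) ≃ Fin (E.prod d)}

theorem liftCol_bijective : (liftCol E d ψ).Bijective := by
  refine Function.bijective_iff_has_inverse.2
    ⟨fun c' v => if h : v ∈ E then ψ.symm (c' (.inr ())) ⟨v, h⟩ else c' (.inl ⟨v, h⟩), ?_, ?_⟩
  · intro c
    funext v
    by_cases h : v ∈ E <;> simp [liftCol, h]
  · intro c'
    funext y
    rcases y with w | ⟨⟨⟩⟩
    · simp [liftCol, w.2]
    · exact (congrArg ψ (funext fun v => dif_pos v.2)).trans (ψ.apply_symm_apply _)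

theorem liftCol_inr_eq_iff {c c' : ∀ v, Fin (d v)} :
    liftCol E d ψ c (.inr ()) = liftCol E d ψ c' (.inr ()) ↔ ∀ v ∈ E, c v = c' v :=
  ψ.injective.eq_iff.trans (by simp [funext_iff])

variable [Fintype V]

@[simp]
theorem inl_mem_liftFace {G : Finset V} {w : {x : V // x ∉ E}} :
    .inl w ∈ liftFace E G ↔ w.1 ∈ G := by
  simp only [liftFace, mem_filter, mem_univ, true_and, Sum.inl.injEq, exists_eq_left']

@[simp]
theorem inr_notMem_liftFace {G : Finset V} {t : Unit} : .inr t ∉ liftFace E G := by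
  simp [liftFace]

theorem liftCol_eq_on_liftFace_iff {G : Finset V} {c c' : ∀ v, Fin (d v)} :
    (∀ y ∈ liftFace E G, liftCol E d ψ c y = liftCol E d ψ c' y) ↔
      ∀ v ∈ G, v ∉ E → c v = c' v := by
  simp only [Sum.forall, inl_mem_liftFace, liftCol, Subtype.forall, inr_notMem_liftFace,
    IsEmpty.forall_iff, implies_true, and_true]
  exact forall_congr' fun v => forall_comm

theorem fiberSumsVanish_liftFace_iff {G : Finset V} (hGE : G ∩ E = ∅)
    (u : (∀ y : GroundSet' E, Fin (weight' E d y)) → ℤ) :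
    FiberSumsVanish (liftFace E G).restrict u ↔
      FiberSumsVanish G.restrict fun c => u (liftCol E d ψ c) :=
  fiberSumsVanish_iff_comp liftCol_bijective fun c c' => by
    simp only [restrict_eq_restrict_iff, liftCol_eq_on_liftFace_iff]
    exact forall₂_congr fun v hv =>
      imp_iff_right (disjoint_left.1 (disjoint_iff_inter_eq_empty.2 hGE) hv)

theorem fiberSumsVanish_insert_liftFace_iff {G : Finset V} (hEG : E ⊆ G)
    (u : (∀ y : GroundSet' E, Fin (weight' E d y)) → ℤ) :
    FiberSumsVanish (insert (.inr ()) (liftFace E G)).restrict u ↔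
      FiberSumsVanish G.restrict fun c => u (liftCol E d ψ c) :=
  fiberSumsVanish_iff_comp liftCol_bijective fun c c' => by
    simp only [restrict_eq_restrict_iff, forall_mem_insert, liftCol_inr_eq_iff,
      liftCol_eq_on_liftFace_iff]
    constructor
    · rintro ⟨hE, hG⟩ v hv
      by_cases hvE : v ∈ E
      exacts [hE v hvE, hG v hv hvE]
    · exact fun h => ⟨fun v hv => h v (hEG hv), fun v hv _ => h v hv⟩

end Contraction

theorem stmt18_general {V : Type*} [Fintype V] [DecidableEq V]
    (faces : Finset (Finset V)) (hdown : ∀ F ∈ faces, ∀ G ⊆ F, G ∈ faces)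
    (d : V → ℕ)
    (E : Finset V)
    (hmeet : ∀ F ∈ faces, (∀ G ∈ faces, F ⊆ G → F = G) → (F ∩ E).Nonempty → E ⊆ F)
    (faces' : Finset (Finset (GroundSet' E)))
    (hfaces' : ∀ F' : Finset (GroundSet' E), F' ∈ faces' ↔
      ∃ F ∈ faces, (∀ G ∈ faces, F ⊆ G → F = G) ∧
        ((F ∩ E = ∅ ∧ F' ⊆ liftFace E F) ∨
          (E ⊆ F ∧ F' ⊆ insert (Sum.inr ()) (liftFace E F))))
    (ψ : (∀ v : {x : V // x ∈ E}, Fin (d v.1)) ≃ Fin (E.prod d))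
    (u : (∀ x : GroundSet' E, Fin (weight' E d x)) → ℤ) :
    (designMatrix faces d).mulVec (fun c => u (liftCol E d ψ c)) = 0 ↔
    (designMatrix faces' (weight' E d)).mulVec u = 0 := by
  have hdown' : ∀ F' ∈ faces', ∀ G' ⊆ F', G' ∈ faces' := by
    intro F' hF' G' hG'
    obtain ⟨F, hF, hmax, hsub⟩ := (hfaces' F').1 hF'
    exact (hfaces' G').2
      ⟨F, hF, hmax, hsub.imp (And.imp_right hG'.trans) (And.imp_right hG'.trans)⟩
  rw [designMatrix_mulVec_eq_zero_iff hdown, designMatrix_mulVec_eq_zero_iff hdown']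
  constructor
  · intro h F' hF'
    obtain ⟨G, hG, -, ⟨hGE, hsub⟩ | ⟨hEG, hsub⟩⟩ := (hfaces' F').1 hF'
    · exact ((fiberSumsVanish_liftFace_iff hGE u).2 (h G hG)).restrict_mono hsub
    · exact ((fiberSumsVanish_insert_liftFace_iff hEG u).2 (h G hG)).restrict_mono hsub
  · intro h F hF
    obtain ⟨G, hFG, hG, hmax⟩ := faces.exists_le_maximal hF
    have hfacet : ∀ H ∈ faces, G ⊆ H → G = H := fun H hH hGH => le_antisymm hGH (hmax hH hGH)
    refine FiberSumsVanish.restrict_mono ?_ hFG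
    rcases (G ∩ E).eq_empty_or_nonempty with hGE | hGE
    · exact (fiberSumsVanish_liftFace_iff hGE u).1
        (h _ ((hfaces' _).2 ⟨G, hG, hfacet, .inl ⟨hGE, subset_rfl⟩⟩))
    · have hEG := hmeet G hG hfacet hGE
      exact (fiberSumsVanish_insert_liftFace_iff hEG u).1
        (h _ ((hfaces' _).2 ⟨G, hG, hfacet, .inr ⟨hEG, subset_rfl⟩⟩))

/-- Let `C` be a simplicial complex (downward-closed set of faces) on `V` with a face `E` such
that every facet meeting `E` contains `E`.  Let `C'` be the complex on
`V' = (V ∪ {v₀}) \ E` whose facets are the facets of `C` disjoint from `E` together with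
`(F \ E) ∪ {v₀}` for facets `F ⊇ E`, and let `d'` agree with `d` off `E` with
`d'_{v₀} = ∏_{v ∈ E} d_v`.  Then, after the natural identification of column index sets
(via any bijection `ψ : ∏_{v ∈ E} [d_v] ≅ [d'_{v₀}]`), the integer kernels of `A_{C,d}` and
`A_{C',d'}` coincide. -/
theorem stmt18 {V : Type*} [Fintype V] [DecidableEq V]
    (faces : Finset (Finset V)) (hdown : ∀ F ∈ faces, ∀ G ⊆ F, G ∈ faces)
    (d : V → ℕ) (hd : ∀ v, 2 ≤ d v)
    (E : Finset V) (hE : E ∈ faces)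
    (hmeet : ∀ F ∈ faces, (∀ G ∈ faces, F ⊆ G → F = G) → (F ∩ E).Nonempty → E ⊆ F)
    (faces' : Finset (Finset (GroundSet' E)))
    (hfaces' : ∀ F' : Finset (GroundSet' E), F' ∈ faces' ↔
      ∃ F ∈ faces, (∀ G ∈ faces, F ⊆ G → F = G) ∧
        ((F ∩ E = ∅ ∧ F' ⊆ liftFace E F) ∨
          (E ⊆ F ∧ F' ⊆ insert (Sum.inr ()) (liftFace E F))))
    (ψ : (∀ v : {x : V // x ∈ E}, Fin (d v.1)) ≃ Fin (E.prod d))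
    (u : (∀ x : GroundSet' E, Fin (weight' E d x)) → ℤ) :
    (designMatrix faces d).mulVec (fun c => u (liftCol E d ψ c)) = 0 ↔
    (designMatrix faces' (weight' E d)).mulVec u = 0 :=
  stmt18_general faces hdown d E hmeet faces' hfaces' ψ u
end

section
/- Let A be an integer matrix with full row rank whose maximal minors all lie in {0, λ, -λ} for some fixed λ > 0, and let u be a nonzero element of ker_Z(A) with inclusion-minimal support. Then all nonzero entries of u have the same absolute value; in particular if the entries of u are relatively prime then u is a {-1,0,1}-vector. -/
/-!
Let `S` be the support of `u` and fix `i ≠ j` in `S`. By minimality, the columns of `A` indexed by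
`S \ {i}` are linearly independent; since `A` has full row rank they extend to a column basis,
i.e. to a nonsingular maximal submatrix `M`. The vector `u - uᵢ eᵢ` is supported on the columns
of `M`, so `M` maps its restriction to `-uᵢ Aᵢ`, and Cramer's rule gives
`uⱼ det M = -uᵢ det M'`, where `M'` is `M` with column `j` replaced by column `i`. Both minors are
nonzero, hence both equal `±λ`, and `|uᵢ| = |uⱼ|`.
-/

open Function

variable {m n o R : Type*}

theorem LinearIndependent.algebraMap_comp {ι : Type*} (K : Type*) [CommRing R] [Field K]
    [Algebra R K] [IsFractionRing R K] {v : ι → n → R} (hv : LinearIndependent R v) :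
    LinearIndependent K (fun i => algebraMap R K ∘ v i) := by
  refine (LinearIndependent.iff_fractionRing R K).mp
    (hv.map' (LinearMap.compLeft (Algebra.linearMap R K) n) ?_)
  exact LinearMap.ker_eq_bot.mpr fun x y h =>
    funext fun k => IsFractionRing.injective R K (congrFun h k)

theorem LinearIndepOn.algebraMap_comp {ι : Type*} (K : Type*) [CommRing R] [Field K]
    [Algebra R K] [IsFractionRing R K] {v : ι → n → R} {s : Set ι} (hv : LinearIndepOn R v s) :
    LinearIndepOn K (fun i => algebraMap R K ∘ v i) s :=
  LinearIndependent.algebraMap_comp K hv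

theorem abs_eq_one_of_finset_gcd_eq_one {ι : Type*} {s : Finset ι} {u : ι → ℤ}
    (hs : s.gcd u = 1) {i : ι} (habs : ∀ j ∈ s, u j ≠ 0 → |u j| = |u i|) : |u i| = 1 := by
  refine Int.eq_one_of_dvd_one (abs_nonneg _) (hs ▸ Finset.dvd_gcd fun j hj => ?_)
  rcases eq_or_ne (u j) 0 with h | h
  · simp [h]
  · exact habs j hj h ▸ abs_dvd_self (u j)

namespace Matrix

theorem mul_det_eq_det_updateCol_mulVec [Fintype m] [DecidableEq m] [CommRing R]
    (M : Matrix m m R) (x : m → R) (p : m) : x p * M.det = (M.updateCol p (M *ᵥ x)).det := by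
  rw [← cramer_apply, cramer_eq_adjugate_mulVec, mulVec_mulVec, adjugate_mul, smul_mulVec,
    one_mulVec, Pi.smul_apply, smul_eq_mul, mul_comm]

theorem submatrix_mulVec_comp_of_eq_zero_off_range [Fintype n] [Fintype o]
    [NonUnitalNonAssocSemiring R] (A : Matrix m n R) {g : o → n} (hg : Injective g) {v : n → R}
    (hv : ∀ k ∉ Set.range g, v k = 0) : A.submatrix id g *ᵥ (v ∘ g) = A *ᵥ v := by
  ext p
  exact Fintype.sum_of_injective g hg _ _ (fun k hk => by simp [hv k hk]) (fun _ => rfl)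

theorem submatrix_update_eq_updateCol [DecidableEq o] (A : Matrix m n R) (g : o → n) (p : o)
    (k : n) : A.submatrix id (update g p k) = (A.submatrix id g).updateCol p (A.col k) := by
  ext q r
  by_cases h : r = p
  · subst h; simp
  · simp [h]

theorem injective_of_det_submatrix_ne_zero [Fintype m] [DecidableEq m] [CommRing R]
    {A : Matrix m n R} {g : m → n} (h : (A.submatrix id g).det ≠ 0) : Injective g := by
  intro p q hpq
  by_contra hne
  exact h (det_zero_of_column_eq hne fun r => by simp [hpq])

theorem mulVec_eq_sum_smul_col [Fintype n] [CommSemiring R] (A : Matrix m n R) (v : n → R) :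
    A *ᵥ v = ∑ k, v k • A.col k := by
  ext p
  simp [mulVec, dotProduct, mul_comm]

theorem linearIndepOn_col_of_forall_mulVec_eq_zero [Fintype n] [CommRing R]
    {A : Matrix m n R} {T : Set n}
    (h : ∀ v : n → R, A *ᵥ v = 0 → (∀ k ∉ T, v k = 0) → v = 0) : LinearIndepOn R A.col T := by
  refine linearIndepOn_iff.mpr fun c hc hcomb => DFunLike.coe_injective (h c ?_ ?_)
  · rw [mulVec_eq_sum_smul_col, ← Fintype.linearCombination_apply,
      ← Finsupp.linearCombination_eq_fintype_linearCombination_apply,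
      Finsupp.linearEquivFunOnFinite_symm_coe, hcomb]
  · exact fun k hk => Finsupp.notMem_support_iff.mp fun hk' => hk (hc hk')

theorem exists_det_submatrix_ne_zero {K : Type*} [Field K] [Fintype m] [DecidableEq m]
    [Fintype n] (A : Matrix m n K) (hA : LinearIndependent K A.row) {T : Set n}
    (hT : LinearIndepOn K A.col T) :
    ∃ g : m → n, T ⊆ Set.range g ∧ (A.submatrix id g).det ≠ 0 := by
  obtain ⟨b, -, hTb, hspan, hb⟩ := exists_linearIndepOn_extension hT (Set.subset_univ T)
  have := Fintype.ofFinite b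
  have hcols : Submodule.span K (Set.range A.col) = ⊤ := by
    apply Submodule.eq_top_of_finrank_eq
    rw [Module.finrank_fintype_fun_eq_card, ← hA.rank_matrix, rank_eq_finrank_span_cols]
  have basis : Module.Basis b K (m → K) := .mk hb.linearIndependent <| by
    rw [← Set.image_eq_range, ← hcols, Submodule.span_le, ← Set.image_univ]
    exact hspan
  let e : m ≃ b := Fintype.equivOfCardEq <| by
    rw [← Module.finrank_eq_card_basis basis, Module.finrank_fintype_fun_eq_card]
  refine ⟨Subtype.val ∘ e, fun k hk => ⟨e.symm ⟨k, hTb hk⟩, by simp⟩, ?_⟩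
  have hcolsg : LinearIndependent K (A.submatrix id (Subtype.val ∘ e)).col :=
    hb.linearIndependent.comp e e.injective
  exact ((isUnit_iff_isUnit_det _).mp (linearIndependent_cols_iff_isUnit.mp hcolsg)).ne_zero

theorem exists_det_submatrix_ne_zero_of_isDomain [CommRing R] [IsDomain R] [Fintype m]
    [DecidableEq m] [Fintype n] (A : Matrix m n R) (hA : LinearIndependent R A.row) {T : Set n}
    (hT : LinearIndepOn R A.col T) :
    ∃ g : m → n, T ⊆ Set.range g ∧ (A.submatrix id g).det ≠ 0 := by
  have hA' : LinearIndependent (FractionRing R) (A.map (algebraMap R (FractionRing R))).row :=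
    hA.algebraMap_comp _
  have hT' : LinearIndepOn (FractionRing R) (A.map (algebraMap R (FractionRing R))).col T :=
    hT.algebraMap_comp _
  obtain ⟨g, hTg, hdet⟩ := exists_det_submatrix_ne_zero _ hA' hT'
  refine ⟨g, hTg, fun h => hdet ?_⟩
  rw [submatrix_map, ← RingHom.mapMatrix_apply, ← RingHom.map_det, h, map_zero]

def HasMinimalKernelSupport [Fintype n] [Semiring R] (A : Matrix m n R) (u : n → R) : Prop :=
  ∀ v : n → R, v ≠ 0 → A *ᵥ v = 0 → {i | v i ≠ 0} ⊆ {i | u i ≠ 0} → {i | v i ≠ 0} = {i | u i ≠ 0}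

namespace HasMinimalKernelSupport

theorem linearIndepOn_col [Fintype n] [CommRing R] {A : Matrix m n R} {u : n → R}
    (hmin : A.HasMinimalKernelSupport u) {T : Set n} (hT : T ⊂ {i | u i ≠ 0}) :
    LinearIndepOn R A.col T := by
  refine linearIndepOn_col_of_forall_mulVec_eq_zero fun v hv hvT => ?_
  by_contra hv0
  have hvT : {i | v i ≠ 0} ⊆ T := fun k hk => by_contra fun hkT => hk (hvT k hkT)
  exact hT.2 (hmin v hv0 hv (hvT.trans hT.1) ▸ hvT)

theorem exists_mul_det_eq_neg_mul_det [CommRing R] [IsDomain R] [Fintype m] [DecidableEq m]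
    [Fintype n] [DecidableEq n] {A : Matrix m n R} (hA : LinearIndependent R A.row) {u : n → R}
    (hker : A *ᵥ u = 0) (hmin : A.HasMinimalKernelSupport u) {i j : n} (hi : u i ≠ 0)
    (hj : u j ≠ 0) (hij : j ≠ i) :
    ∃ g g' : m → n, (A.submatrix id g).det ≠ 0 ∧ (A.submatrix id g').det ≠ 0 ∧
      u j * (A.submatrix id g).det = -(u i * (A.submatrix id g').det) := by
  obtain ⟨g, hTg, hdet⟩ := exists_det_submatrix_ne_zero_of_isDomain A hA
    (hmin.linearIndepOn_col (T := {k | u k ≠ 0} \ {i}) ⟨Set.sdiff_subset, fun h => (h hi).2 rfl⟩)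
  obtain ⟨p, rfl⟩ : j ∈ Set.range g := hTg ⟨hj, hij⟩
  set v := u - Pi.single i (u i)
  have hv : ∀ k ∉ Set.range g, v k = 0 := by
    intro k hk
    by_cases hki : k = i
    · simp [v, hki]
    · have : u k = 0 := by_contra fun h => hk (hTg ⟨h, hki⟩)
      simp [v, hki, this]
  have hMv : A.submatrix id g *ᵥ (v ∘ g) = -u i • A.col i := by
    rw [submatrix_mulVec_comp_of_eq_zero_off_range A (injective_of_det_submatrix_ne_zero hdet) hv]
    ext q
    simp [v, mulVec_sub, hker, mulVec_single, mul_comm]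
  have hrel : u (g p) * (A.submatrix id g).det = -(u i * (A.submatrix id (update g p i)).det) :=
    calc u (g p) * (A.submatrix id g).det = (v ∘ g) p * (A.submatrix id g).det := by
          simp [v, hij]
      _ = ((A.submatrix id g).updateCol p (-u i • A.col i)).det := by
          rw [mul_det_eq_det_updateCol_mulVec, hMv]
      _ = -(u i * (A.submatrix id (update g p i)).det) := by
          rw [det_updateCol_smul, submatrix_update_eq_updateCol, neg_mul]
  refine ⟨g, update g p i, hdet, fun h0 => ?_, hrel⟩
  rw [h0, mul_zero, neg_zero] at hrel
  exact mul_ne_zero hj hdet hrel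

end HasMinimalKernelSupport

theorem abs_det_submatrix_eq_abs_of_ne_zero [Fintype m] [DecidableEq m] {A : Matrix m n ℤ}
    {l : ℤ} (hminor : ∀ g : m → n, Injective g →
      (A.submatrix id g).det = 0 ∨ (A.submatrix id g).det = l ∨ (A.submatrix id g).det = -l)
    {g : m → n} (hg : (A.submatrix id g).det ≠ 0) : |(A.submatrix id g).det| = |l| := by
  rcases hminor g (injective_of_det_submatrix_ne_zero hg) with h | h | h
  · exact absurd h hg
  · rw [h]
  · rw [h, abs_neg]

theorem HasMinimalKernelSupport.abs_eq_abs [Fintype m] [DecidableEq m] [Fintype n]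
    [DecidableEq n] {A : Matrix m n ℤ} (hA : LinearIndependent ℤ A.row) {l : ℤ}
    (hminor : ∀ g : m → n, Injective g →
      (A.submatrix id g).det = 0 ∨ (A.submatrix id g).det = l ∨ (A.submatrix id g).det = -l)
    {u : n → ℤ} (hker : A *ᵥ u = 0) (hmin : A.HasMinimalKernelSupport u) {i j : n}
    (hi : u i ≠ 0) (hj : u j ≠ 0) : |u i| = |u j| := by
  rcases eq_or_ne j i with rfl | hij
  · rfl
  obtain ⟨g, g', hg, hg', hrel⟩ := hmin.exists_mul_det_eq_neg_mul_det hA hker hi hj hij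
  have habs := congrArg abs hrel
  rw [abs_neg, abs_mul, abs_mul, abs_det_submatrix_eq_abs_of_ne_zero hminor hg,
    abs_det_submatrix_eq_abs_of_ne_zero hminor hg'] at habs
  have hl : |l| ≠ 0 := abs_det_submatrix_eq_abs_of_ne_zero hminor hg ▸ abs_ne_zero.mpr hg
  exact (mul_right_cancel₀ hl habs).symm

end Matrix

theorem stmt19_general {d n : ℕ} (A : Matrix (Fin d) (Fin n) ℤ)
    (hrank : LinearIndependent ℤ (fun i : Fin d => A i))
    (l : ℤ)
    (hminor : ∀ g : Fin d → Fin n, Function.Injective g →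
      (A.submatrix id g).det = 0 ∨ (A.submatrix id g).det = l ∨ (A.submatrix id g).det = -l)
    (u : Fin n → ℤ) (hker : A.mulVec u = 0)
    (hmin : ∀ v : Fin n → ℤ, v ≠ 0 → A.mulVec v = 0 →
      {i | v i ≠ 0} ⊆ {i | u i ≠ 0} → {i | v i ≠ 0} = {i | u i ≠ 0}) :
    (∀ i j, u i ≠ 0 → u j ≠ 0 → |u i| = |u j|) ∧
    (Finset.univ.gcd u = 1 → ∀ i, u i = -1 ∨ u i = 0 ∨ u i = 1) := by
  have habs : ∀ i j, u i ≠ 0 → u j ≠ 0 → |u i| = |u j| := fun _ _ hi hj =>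
    Matrix.HasMinimalKernelSupport.abs_eq_abs hrank hminor hker hmin hi hj
  refine ⟨habs, fun hgcd i => ?_⟩
  rcases eq_or_ne (u i) 0 with hi | hi
  · exact Or.inr (Or.inl hi)
  · rcases (abs_eq zero_le_one).mp
      (abs_eq_one_of_finset_gcd_eq_one hgcd fun j _ hj => habs j i hj hi) with h | h
    · exact Or.inr (Or.inr h)
    · exact Or.inl h

/-- Let `A` be a full-row-rank integer matrix whose maximal minors all lie in `{0, l, -l}` for
some `l > 0`, and let `u` be a nonzero integer kernel vector of inclusion-minimal support.
Then all nonzero entries of `u` have the same absolute value; in particular, if the entries of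
`u` are relatively prime then `u` is a `{-1,0,1}`-vector. -/
theorem stmt19 {d n : ℕ} (A : Matrix (Fin d) (Fin n) ℤ)
    (hrank : LinearIndependent ℤ (fun i : Fin d => A i))
    (l : ℤ) (hl : 0 < l)
    (hminor : ∀ g : Fin d → Fin n, Function.Injective g →
      (A.submatrix id g).det = 0 ∨ (A.submatrix id g).det = l ∨ (A.submatrix id g).det = -l)
    (u : Fin n → ℤ) (hu0 : u ≠ 0) (hker : A.mulVec u = 0)
    (hmin : ∀ v : Fin n → ℤ, v ≠ 0 → A.mulVec v = 0 →
      {i | v i ≠ 0} ⊆ {i | u i ≠ 0} → {i | v i ≠ 0} = {i | u i ≠ 0}) :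
    (∀ i j, u i ≠ 0 → u j ≠ 0 → |u i| = |u j|) ∧
    (Finset.univ.gcd u = 1 → ∀ i, u i = -1 ∨ u i = 0 ∨ u i = 1) :=
  stmt19_general A hrank l hminor u hker hmin
end
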